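/- arXiv:2407.19132 — 7 statements merged into one kernel-verified Lean document; each statement's English description precedes it below -/
import Mathlib

section
/- Let k be a field of characteristic 0, let (V, g) be a vector space with a homogeneous form g of degree d, and suppose (V, g) is homogeneous in the sense that every isomorphism between finite-dimensional g-subspaces extends to an automorphism of (V, g). Then for any e ≥ 1, the space (V, g^e) is also homogeneous: every linear isomorphism α : W → W' between finite-dimensional subspaces satisfying g^e(α x) = g^e(x) for all x ∈ W extends to a linear automorphism σ of V with g^e(σ x) = g^e(x) for all x ∈ V. -/
open MvPolynomial

lemma eval_smul_of_homog {k : Type*} [CommRing k] {ι : Type*} {P : MvPolynomial ι k} {d : ℕ}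
    (hP : P.IsHomogeneous d) (c : k) (x : ι → k) :
    MvPolynomial.eval (c • x) P = c ^ d * MvPolynomial.eval x P := by
  rw [eval_eq, eval_eq, Finset.mul_sum]
  apply Finset.sum_congr rfl
  intro m hm
  have hdeg : m.degree = d := by
    rw [Finsupp.degree_eq_weight_one]
    exact hP (mem_support_iff.mp hm)
  have : ∏ i ∈ m.support, (c • x) i ^ m i
      = (∏ i ∈ m.support, c ^ m i) * ∏ i ∈ m.support, x i ^ m i := by
    rw [← Finset.prod_mul_distrib]
    exact Finset.prod_congr rfl fun i _ => by simp [mul_pow]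
  rw [this, Finset.prod_pow_eq_pow_sum]
  have : ∑ i ∈ m.support, m i = d := by
    rw [← hdeg]; rfl
  rw [this]; ring

lemma root_from_base {k F : Type*} [Field k] [IsAlgClosed k] [Field F]
    (f : k →+* F) (e : ℕ) (he : 1 ≤ e) (t : F) (ht : t ^ e = 1) :
    ∃ ζ : k, ζ ^ e = 1 ∧ f ζ = t := by
  set p : Polynomial k := Polynomial.X ^ e - Polynomial.C 1 with hp
  have hmonic : p.Monic := Polynomial.monic_X_pow_sub_C 1 (by omega)
  have hsplit : p.Splits := IsAlgClosed.splits p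
  have hfact := hsplit.eq_prod_roots_of_monic hmonic
  have heval : Polynomial.eval₂ f t p = 0 := by
    simp [hp, ht]
  rw [hfact] at heval
  rw [Polynomial.eval₂_eq_eval_map, Polynomial.map_multiset_prod,
    Polynomial.eval_multiset_prod] at heval
  simp only [Multiset.map_map, Function.comp, Polynomial.map_sub, Polynomial.map_X,
    Polynomial.map_C, Polynomial.eval_sub, Polynomial.eval_X, Polynomial.eval_C] at heval
  have hmem := Multiset.prod_eq_zero_iff.mp heval
  obtain ⟨a, ha, hy0⟩ := Multiset.mem_map.mp hmem
  have hroot : p.eval a = 0 := Polynomial.isRoot_of_mem_roots ha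
  refine ⟨a, ?_, (sub_eq_zero.mp hy0).symm⟩
  · have := hroot
    simp [hp, sub_eq_zero] at this
    simpa using this

lemma exists_root_of_pow_eq_pow {k : Type*} [Field k] [IsAlgClosed k] {σ : Type*}
    (e : ℕ) (he : 1 ≤ e) (Q1 Q2 : MvPolynomial σ k) (h : Q1 ^ e = Q2 ^ e) :
    ∃ ζ : k, ζ ^ e = 1 ∧ Q1 = MvPolynomial.C ζ * Q2 := by
  by_cases h2 : Q2 = 0
  · refine ⟨1, one_pow e, ?_⟩
    subst h2
    simp only [zero_pow (by omega : e ≠ 0)] at h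
    rw [pow_eq_zero_iff (by omega : e ≠ 0)] at h
    simp [h]
  · have hinj : Function.Injective (algebraMap (MvPolynomial σ k) (FractionRing (MvPolynomial σ k))) :=
      IsFractionRing.injective _ _
    set φ := algebraMap (MvPolynomial σ k) (FractionRing (MvPolynomial σ k)) with hφ
    have ha2 : φ Q2 ≠ 0 := fun hc => h2 (hinj (by simpa using hc))
    set t : FractionRing (MvPolynomial σ k) := φ Q1 / φ Q2 with hT
    have ht : t ^ e = 1 := by
      rw [hT, div_pow, ← map_pow, ← map_pow, h]
      exact div_self (by rw [map_pow]; exact pow_ne_zero e ha2)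
    obtain ⟨ζ, hζ, hfζ⟩ := root_from_base (φ.comp (MvPolynomial.C)) e he t ht
    refine ⟨ζ, hζ, hinj ?_⟩
    rw [map_mul]
    have h3 : φ Q1 = t * φ Q2 := by
      rw [hT, div_mul_cancel₀ _ ha2]
    rw [h3, ← hfζ]
    rfl

lemma eval_bind_linear {k : Type*} [Field k] {ι : Type*} {n : ℕ}
    (P : MvPolynomial ι k) (M : (Fin n → k) →ₗ[k] (ι →₀ k)) (c : Fin n → k) :
    MvPolynomial.eval c (MvPolynomial.bind₁
        (fun i => ∑ j, MvPolynomial.C ((M (Pi.single j 1)) i) * MvPolynomial.X j) P)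
      = MvPolynomial.eval (fun i => (M c) i) P := by
  have key := eval₂Hom_bind₁ (RingHom.id k) c
    (fun i => ∑ j, MvPolynomial.C ((M (Pi.single j 1)) i) * MvPolynomial.X j) P
  have key' : MvPolynomial.eval c (MvPolynomial.bind₁
        (fun i => ∑ j, MvPolynomial.C ((M (Pi.single j 1)) i) * MvPolynomial.X j) P)
      = MvPolynomial.eval (fun i => MvPolynomial.eval c
          (∑ j, MvPolynomial.C ((M (Pi.single j 1)) i) * MvPolynomial.X j)) P := key
  have hfun : (fun i => MvPolynomial.eval c
      (∑ j, MvPolynomial.C ((M (Pi.single j 1)) i) * MvPolynomial.X j)) = fun i => (M c) i := by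
    funext i
    have hc := pi_eq_sum_univ c
    calc MvPolynomial.eval c (∑ j, MvPolynomial.C ((M (Pi.single j 1)) i) * MvPolynomial.X j)
        = ∑ j, (M (Pi.single j 1)) i * c j := by simp
      _ = (M c) i := by
          conv_rhs => rw [hc]
          rw [map_sum, Finsupp.finset_sum_apply]
          apply Finset.sum_congr rfl
          intro j _
          rw [map_smul]
          have : (fun j_1 => if j = j_1 then (1:k) else 0) = Pi.single j 1 := by
            funext j1; simp [Pi.single_apply, eq_comm]
          rw [this]
          simp [mul_comm]
  rw [key', hfun]


/-- If `(V, g)` is a homogeneous `[(d)]`-space (every isomorphism between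
finite-dimensional subspaces preserving `g` extends to a `g`-preserving automorphism of `V`),
then `(V, g ^ e)` is also homogeneous.  Here `V = ι →₀ k` and `g` is given by a homogeneous
polynomial of degree `d`. -/
theorem stmt1 {k : Type*} [Field k] [IsAlgClosed k] [CharZero k]
    {ι : Type*} (d e : ℕ) (hd : 1 ≤ d) (he : 1 ≤ e)
    (P : MvPolynomial ι k) (hP : P.IsHomogeneous d)
    (g : (ι →₀ k) → k) (hg : ∀ x, g x = MvPolynomial.eval (fun i => x i) P)
    (hhomog : ∀ (W W' : Submodule k (ι →₀ k)),
      FiniteDimensional k W → FiniteDimensional k W' →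
      ∀ α : W ≃ₗ[k] W', (∀ x : W, g (α x : ι →₀ k) = g (x : ι →₀ k)) →
        ∃ σ : (ι →₀ k) ≃ₗ[k] (ι →₀ k), (∀ v, g (σ v) = g v) ∧
          ∀ x : W, σ (x : ι →₀ k) = (α x : ι →₀ k)) :
    ∀ (W W' : Submodule k (ι →₀ k)),
      FiniteDimensional k W → FiniteDimensional k W' →
      ∀ α : W ≃ₗ[k] W', (∀ x : W, g (α x : ι →₀ k) ^ e = g (x : ι →₀ k) ^ e) →
        ∃ σ : (ι →₀ k) ≃ₗ[k] (ι →₀ k), (∀ v, g (σ v) ^ e = g v ^ e) ∧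
          ∀ x : W, σ (x : ι →₀ k) = (α x : ι →₀ k) := by
  intro W W' hW hW' α hα
  haveI := hW
  haveI := hW'
  -- g of a scalar multiple
  have smul_g : ∀ (c : k) (v : ι →₀ k), g (c • v) = c ^ d * g v := by
    intro c v
    rw [hg, hg]
    have hv : (fun i => (c • v) i) = c • (fun i => v i) := by
      funext i; simp
    rw [hv, eval_smul_of_homog hP]
  haveI : Module.Free k W := Module.Free.of_divisionRing k W
  set n := Module.finrank k W with hn
  let b : Module.Basis (Fin n) k W := Module.finBasis k W
  let L : (Fin n → k) →ₗ[k] (ι →₀ k) := W.subtype ∘ₗ (b.equivFun.symm).toLinearMap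
  let L' : (Fin n → k) →ₗ[k] (ι →₀ k) :=
    W'.subtype ∘ₗ α.toLinearMap ∘ₗ (b.equivFun.symm).toLinearMap
  set Q1 := MvPolynomial.bind₁
    (fun i => ∑ j, MvPolynomial.C ((L' (Pi.single j 1)) i) * MvPolynomial.X j) P with hQ1def
  set Q2 := MvPolynomial.bind₁
    (fun i => ∑ j, MvPolynomial.C ((L (Pi.single j 1)) i) * MvPolynomial.X j) P with hQ2def
  have hQ1 : ∀ c, MvPolynomial.eval c Q1 = g (L' c) := by
    intro c; rw [hg, hQ1def]; exact eval_bind_linear P L' c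
  have hQ2 : ∀ c, MvPolynomial.eval c Q2 = g (L c) := by
    intro c; rw [hg, hQ2def]; exact eval_bind_linear P L c
  have hLc : ∀ c, L c = ((b.equivFun.symm c : W) : ι →₀ k) := fun c => rfl
  have hL'c : ∀ c, L' c = ((α (b.equivFun.symm c) : W') : ι →₀ k) := fun c => rfl
  have heq : Q1 ^ e = Q2 ^ e := by
    apply MvPolynomial.funext
    intro c
    rw [map_pow, map_pow, hQ1, hQ2, hLc, hL'c]
    exact hα (b.equivFun.symm c)
  obtain ⟨ζ, hζ, hQ⟩ := exists_root_of_pow_eq_pow e he Q1 Q2 heq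
  have hζ0 : ζ ≠ 0 := by
    intro h
    rw [h, zero_pow (by omega : e ≠ 0)] at hζ
    exact zero_ne_one hζ
  have key : ∀ x : W, g (α x : ι →₀ k) = ζ * g (x : ι →₀ k) := by
    intro x
    have h1 := hQ1 (b.equivFun x)
    rw [hQ, map_mul, MvPolynomial.eval_C, hQ2] at h1
    have hx : b.equivFun.symm (b.equivFun x) = x := b.equivFun.symm_apply_apply x
    rw [hLc, hL'c, hx] at h1
    exact h1.symm
  obtain ⟨δ, hδ⟩ := IsAlgClosed.exists_pow_nat_eq ζ (by omega : 0 < d)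
  have hδ0 : δ ≠ 0 := by
    intro h
    rw [h, zero_pow (by omega : d ≠ 0)] at hδ
    exact hζ0 hδ.symm
  let α' : W ≃ₗ[k] W' := α.trans (LinearEquiv.smulOfNeZero k W' δ⁻¹ (inv_ne_zero hδ0))
  have hα'x : ∀ x : W, ((α' x : W') : ι →₀ k) = δ⁻¹ • ((α x : W') : ι →₀ k) := by
    intro x
    simp [α', LinearEquiv.smulOfNeZero_apply, Units.smul_mk0]
  have hα' : ∀ x : W, g (α' x : ι →₀ k) = g (x : ι →₀ k) := by
    intro x
    rw [hα'x, smul_g, key, inv_pow, hδ]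
    rw [inv_mul_cancel_left₀ hζ0]
  obtain ⟨σ₀, hσ₀g, hσ₀x⟩ := hhomog W W' hW hW' α' hα'
  refine ⟨σ₀.trans (LinearEquiv.smulOfNeZero k (ι →₀ k) δ hδ0), ?_, ?_⟩
  · intro v
    have : (σ₀.trans (LinearEquiv.smulOfNeZero k (ι →₀ k) δ hδ0)) v = δ • σ₀ v := by
      simp [LinearEquiv.smulOfNeZero_apply, Units.smul_mk0]
    rw [this, smul_g, hδ, hσ₀g, mul_pow, hζ, one_mul]
  · intro x
    have h1 : (σ₀.trans (LinearEquiv.smulOfNeZero k (ι →₀ k) δ hδ0)) (x : ι →₀ k)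
        = δ • σ₀ (x : ι →₀ k) := by
      simp [LinearEquiv.smulOfNeZero_apply, Units.smul_mk0]
    rw [h1, hσ₀x, hα'x, smul_smul, mul_inv_cancel₀ hδ0, one_smul]
end

section
/- Let C be a category in which every morphism is a monomorphism, and let Ω be a countable ind-object of C (a colimit of a chain X₁ → X₂ → ⋯ of objects of C). If Ω is f-injective (for any embeddings α : X → Y and γ : X → Ω with X, Y in C there is β : Y → Ω with γ = β ∘ α), then Ω is homogeneous: for any two embeddings α, β : X → Ω with X in C there is an automorphism σ of Ω with β = σ ∘ α. -/
open CategoryTheory Limits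

/-- In a category all of whose morphisms are monomorphisms, a countable
ind-object `Ω = colim Xₙ` (with each `Xₙ` an object of the subcategory `P`, and with
morphisms from objects of `P` into the colimit factoring through a finite stage) that is
f-injective is homogeneous. -/
theorem stmt4 {D : Type*} [Category D] (P : D → Prop)
    (hmono : ∀ ⦃A B : D⦄ (f : A ⟶ B), Mono f)
    (X : ℕ ⥤ D) (hX : ∀ n, P (X.obj n))
    (c : Cocone X) (hc : IsColimit c)
    (hfp : ∀ ⦃A : D⦄, P A → ∀ g : A ⟶ c.pt,
      ∃ (n : ℕ) (h : A ⟶ X.obj n), h ≫ c.ι.app n = g)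
    (hinj : ∀ ⦃A B : D⦄, P A → P B → ∀ (α : A ⟶ B) (γ : A ⟶ c.pt),
      ∃ β : B ⟶ c.pt, γ = α ≫ β) :
    ∀ ⦃A : D⦄, P A → ∀ (α β : A ⟶ c.pt), ∃ σ : c.pt ≅ c.pt, β = α ≫ σ.hom := by
  intro A hA α β
  classical
  obtain ⟨n₀, a', ha⟩ := hfp hA α
  obtain ⟨g₀, hg₀⟩ := hinj hA (hX n₀) a' β
  -- one back-and-forth step
  have step : ∀ p : (Σ' n, X.obj n ⟶ c.pt), ∃ (q : (Σ' n, X.obj n ⟶ c.pt))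
      (h : X.obj p.1 ⟶ X.obj q.1),
      p.1 < q.1 ∧ h ≫ c.ι.app q.1 = p.2 ∧ h ≫ q.2 = c.ι.app p.1 := by
    intro p
    obtain ⟨n, h', hh'⟩ := hfp (hX p.1) p.2
    have hb : (h' ≫ X.map (homOfLE (le_max_left n (p.1+1)))) ≫
        c.ι.app (max n (p.1+1)) = p.2 := by
      rw [Category.assoc, c.w]; exact hh'
    obtain ⟨f, hf⟩ := hinj (hX p.1) (hX (max n (p.1+1)))
      (h' ≫ X.map (homOfLE (le_max_left n (p.1+1)))) (c.ι.app p.1)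
    exact ⟨⟨max n (p.1+1), f⟩, h' ≫ X.map (homOfLE (le_max_left n (p.1+1))),
      lt_of_lt_of_le (Nat.lt_succ_self p.1) (le_max_right n (p.1+1)), hb, hf.symm⟩
  choose F H hlt hfac hback using step
  let s : ℕ → (Σ' n, X.obj n ⟶ c.pt) := fun n => Nat.rec ⟨n₀, g₀⟩ (fun _ p => F p) n
  let N : ℕ → ℕ := fun n => (s n).1
  let G : ∀ n, X.obj (N n) ⟶ c.pt := fun n => (s n).2
  have rlt : ∀ n, N n < N (n+1) := fun n => hlt (s n)
  have hNmono : StrictMono N := strictMono_nat_of_lt_succ rlt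
  let Hs : ∀ n, X.obj (N n) ⟶ X.obj (N (n+1)) := fun n => H (s n)
  have r1 : ∀ n, Hs n ≫ c.ι.app (N (n+1)) = G n := fun n => hfac (s n)
  have r2 : ∀ n, Hs n ≫ G (n+1) = c.ι.app (N n) := fun n => hback (s n)
  have hHH : ∀ n, Hs n ≫ Hs (n+1) =
      X.map (homOfLE (hNmono.monotone (by omega : n ≤ n + 2))) := by
    intro n
    haveI := hmono (c.ι.app (N (n+2)))
    rw [← cancel_mono (c.ι.app (N (n+2))), Category.assoc, r1 (n+1), r2 n, c.w]
  have compat : ∀ (d j j' : ℕ), j' = j + 2*d → ∀ (h : N j ≤ N j'),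
      X.map (homOfLE h) ≫ G j' = G j := by
    intro d
    induction d with
    | zero =>
      intro j j' e h
      have e' : j' = j := by omega
      subst e'
      rw [show homOfLE h = 𝟙 _ from Subsingleton.elim _ _, X.map_id, Category.id_comp]
    | succ d ih =>
      intro j j' e h
      have h1 : N j ≤ N (j+2) := hNmono.monotone (show j ≤ j+2 by omega)
      have h2 : N (j+2) ≤ N j' := hNmono.monotone (show j+2 ≤ j' by omega)
      have hsplit : homOfLE h = homOfLE h1 ≫ homOfLE h2 := Subsingleton.elim _ _
      rw [hsplit, X.map_comp, Category.assoc, ih (j+2) j' (by omega) h2,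
        ← hHH j, Category.assoc, r2 (j+1), r1 j]
  have hle1 : ∀ m : ℕ, m ≤ N (2*m) := fun m => le_trans (by omega : m ≤ 2*m) hNmono.le_apply
  have hle2 : ∀ m : ℕ, m ≤ N (2*m+1) := fun m => le_trans (by omega : m ≤ 2*m+1) hNmono.le_apply
  let Φc : Cocone X :=
    { pt := c.pt
      ι := { app := fun m => X.map (homOfLE (hle1 m)) ≫ G (2*m)
             naturality := by
               intro m m' f
               have hmm' : m ≤ m' := leOfHom f
               have key : X.map f ≫ (X.map (homOfLE (hle1 m')) ≫ G (2*m')) =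
                   X.map (homOfLE (hle1 m)) ≫ G (2*m) := by
                 rw [← compat (m'-m) (2*m) (2*m') (by omega)
                     (hNmono.monotone (show 2*m ≤ 2*m' by omega)),
                   ← Category.assoc, ← Category.assoc, ← X.map_comp, ← X.map_comp]
                 congr 1
               simpa using key } }
  let Ψc : Cocone X :=
    { pt := c.pt
      ι := { app := fun m => X.map (homOfLE (hle2 m)) ≫ G (2*m+1)
             naturality := by
               intro m m' f
               have hmm' : m ≤ m' := leOfHom f
               have key : X.map f ≫ (X.map (homOfLE (hle2 m')) ≫ G (2*m'+1)) =
                   X.map (homOfLE (hle2 m)) ≫ G (2*m+1) := by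
                 rw [← compat (m'-m) (2*m+1) (2*m'+1) (by omega)
                     (hNmono.monotone (show 2*m+1 ≤ 2*m'+1 by omega)),
                   ← Category.assoc, ← Category.assoc, ← X.map_comp, ← X.map_comp]
                 congr 1
               simpa using key } }
  let Φ := hc.desc Φc
  let Ψ := hc.desc Ψc
  have hΦ : ∀ m, c.ι.app m ≫ Φ = X.map (homOfLE (hle1 m)) ≫ G (2*m) :=
    fun m => hc.fac Φc m
  have hΨ : ∀ m, c.ι.app m ≫ Ψ = X.map (homOfLE (hle2 m)) ≫ G (2*m+1) :=
    fun m => hc.fac Ψc m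
  have hΦΨ : Φ ≫ Ψ = 𝟙 c.pt := by
    apply hc.hom_ext; intro m
    rw [← Category.assoc, hΦ m, Category.assoc, ← r1 (2*m),
      Category.assoc, hΨ (N (2*m+1)),
      compat (N (2*m+1) - m) (2*m+1) (2*(N (2*m+1))+1)
        (by have : 2*m+1 ≤ N (2*m+1) := hNmono.le_apply; omega) (hle2 (N (2*m+1))),
      r2 (2*m), c.w]
    exact (Category.comp_id _).symm
  have hΨΦ : Ψ ≫ Φ = 𝟙 c.pt := by
    apply hc.hom_ext; intro m
    rw [← Category.assoc, hΨ m, Category.assoc, ← r1 (2*m+1),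
      Category.assoc, hΦ (N (2*m+2)),
      compat (N (2*m+2) - (m+1)) (2*m+2) (2*(N (2*m+2)))
        (by have : 2*m+2 ≤ N (2*m+2) := hNmono.le_apply; omega) (hle1 (N (2*m+2))),
      r2 (2*m+1), c.w]
    exact (Category.comp_id _).symm
  refine ⟨⟨Φ, Ψ, hΦΨ, hΨΦ⟩, ?_⟩
  rw [← ha, Category.assoc, hΦ n₀,
    compat n₀ 0 (2*n₀) (by omega) (hle1 n₀)]
  exact hg₀
end

section
/- Let C be a category whose morphisms are all monomorphisms, admitting countable chain colimits of objects. Any two countable ind-objects of C that are both universal (every object of C embeds into them) and homogeneous are isomorphic. -/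
open CategoryTheory Limits

/-- In a category all of whose morphisms are monomorphisms, any two countable
ind-objects (colimits of countable chains of objects of `P`) that are both universal and
homogeneous are isomorphic. -/
theorem stmt5 {D : Type*} [Category D] (P : D → Prop)
    (hmono : ∀ ⦃A B : D⦄ (f : A ⟶ B), Mono f)
    (X : ℕ ⥤ D) (hX : ∀ n, P (X.obj n))
    (c : Cocone X) (hc : IsColimit c)
    (hfp : ∀ ⦃A : D⦄, P A → ∀ g : A ⟶ c.pt,
      ∃ (n : ℕ) (h : A ⟶ X.obj n), h ≫ c.ι.app n = g)
    (huniv : ∀ ⦃A : D⦄, P A → Nonempty (A ⟶ c.pt))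
    (hhomog : ∀ ⦃A : D⦄, P A → ∀ (α β : A ⟶ c.pt), ∃ σ : c.pt ≅ c.pt, β = α ≫ σ.hom)
    (Y : ℕ ⥤ D) (hY : ∀ n, P (Y.obj n))
    (c' : Cocone Y) (hc' : IsColimit c')
    (hfp' : ∀ ⦃A : D⦄, P A → ∀ g : A ⟶ c'.pt,
      ∃ (n : ℕ) (h : A ⟶ Y.obj n), h ≫ c'.ι.app n = g)
    (huniv' : ∀ ⦃A : D⦄, P A → Nonempty (A ⟶ c'.pt))
    (hhomog' : ∀ ⦃A : D⦄, P A → ∀ (α β : A ⟶ c'.pt), ∃ σ : c'.pt ≅ c'.pt, β = α ≫ σ.hom) :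
    Nonempty (c.pt ≅ c'.pt) := by
  classical
  -- injectivity of c : given f : A ⟶ B and g : A ⟶ c.pt, extend g along f
  have inj : ∀ (A B : D), P A → P B → ∀ (f : A ⟶ B) (g : A ⟶ c.pt),
      ∃ h : B ⟶ c.pt, f ≫ h = g := by
    intro A B hA hB f g
    obtain ⟨β⟩ := huniv hB
    obtain ⟨σ, hσ⟩ := hhomog hA (f ≫ β) g
    exact ⟨β ≫ σ.hom, by rw [hσ, Category.assoc]⟩
  have inj' : ∀ (A B : D), P A → P B → ∀ (f : A ⟶ B) (g : A ⟶ c'.pt),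
      ∃ h : B ⟶ c'.pt, f ≫ h = g := by
    intro A B hA hB f g
    obtain ⟨β⟩ := huniv' hB
    obtain ⟨σ, hσ⟩ := hhomog' hA (f ≫ β) g
    exact ⟨β ≫ σ.hom, by rw [hσ, Category.assoc]⟩
  -- the back-and-forth step
  have step : ∀ (n m : ℕ) (u : X.obj n ⟶ Y.obj m),
      ∃ (a b : ℕ) (han : n < a) (hbm : m < b) (w : Y.obj m ⟶ X.obj a)
        (u₂ : X.obj a ⟶ Y.obj b),
        u ≫ w = X.map (homOfLE han.le) ∧ w ≫ u₂ = Y.map (homOfLE hbm.le) := by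
    intro n m u
    obtain ⟨ψ, hψ⟩ := inj _ _ (hX n) (hY m) u (c.ι.app n)
    obtain ⟨n₁, v₁, hv₁⟩ := hfp (hY m) ψ
    have han : n < max (n + 1) n₁ := lt_of_lt_of_le (Nat.lt_succ_self n) (le_max_left _ _)
    have hn₁ : n₁ ≤ max (n + 1) n₁ := le_max_right _ _
    have hw : u ≫ (v₁ ≫ X.map (homOfLE hn₁)) = X.map (homOfLE han.le) := by
      haveI := hmono (c.ι.app (max (n + 1) n₁))
      rw [← cancel_mono (c.ι.app (max (n + 1) n₁))]
      simp only [Category.assoc]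
      rw [c.w (homOfLE hn₁), hv₁, hψ, c.w (homOfLE han.le)]
    obtain ⟨φ, hφ⟩ := inj' _ _ (hY m) (hX (max (n + 1) n₁))
      (v₁ ≫ X.map (homOfLE hn₁)) (c'.ι.app m)
    obtain ⟨m₁, u₁, hu₁⟩ := hfp' (hX (max (n + 1) n₁)) φ
    have hbm : m < max (m + 1) m₁ := lt_of_lt_of_le (Nat.lt_succ_self m) (le_max_left _ _)
    have hm₁ : m₁ ≤ max (m + 1) m₁ := le_max_right _ _
    have hu : (v₁ ≫ X.map (homOfLE hn₁)) ≫ (u₁ ≫ Y.map (homOfLE hm₁)) =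
        Y.map (homOfLE hbm.le) := by
      haveI := hmono (c'.ι.app (max (m + 1) m₁))
      rw [← cancel_mono (c'.ι.app (max (m + 1) m₁))]
      simp only [Category.assoc]
      rw [c'.w (homOfLE hm₁), hu₁, ← Category.assoc, hφ, c'.w (homOfLE hbm.le)]
    exact ⟨max (n + 1) n₁, max (m + 1) m₁, han, hbm, v₁ ≫ X.map (homOfLE hn₁),
      u₁ ≫ Y.map (homOfLE hm₁), hw, hu⟩
  choose sa sb hsa hsb sv su h1 h2 using step
  -- initial datum
  obtain ⟨φ₀⟩ := huniv' (hX 0)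
  obtain ⟨m0, u0, -⟩ := hfp' (hX 0) φ₀
  -- the recursively defined sequence
  let s : ℕ → Σ a b : ℕ, X.obj a ⟶ Y.obj b :=
    fun k => Nat.rec ⟨0, m0, u0⟩
      (fun _ p => ⟨sa p.1 p.2.1 p.2.2, sb p.1 p.2.1 p.2.2, su p.1 p.2.1 p.2.2⟩) k
  let N : ℕ → ℕ := fun k => (s k).1
  let M : ℕ → ℕ := fun k => (s k).2.1
  let U : ∀ k, X.obj (N k) ⟶ Y.obj (M k) := fun k => (s k).2.2
  let V : ∀ k, Y.obj (M k) ⟶ X.obj (N (k + 1)) := fun k => sv (s k).1 (s k).2.1 (s k).2.2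
  have hNs : StrictMono N := strictMono_nat_of_lt_succ fun k => hsa _ _ _
  have hMs : StrictMono M := strictMono_nat_of_lt_succ fun k => hsb _ _ _
  have hUV : ∀ k (h : N k ≤ N (k + 1)), U k ≫ V k = X.map (homOfLE h) :=
    fun k _ => h1 _ _ _
  have hVU : ∀ k (h : M k ≤ M (k + 1)), V k ≫ U (k + 1) = Y.map (homOfLE h) :=
    fun k _ => h2 _ _ _
  -- compatibility of the U's with the chain, at the level of c'
  have lemA : ∀ (k j : ℕ) (h : j ≤ k),
      X.map (homOfLE (hNs.monotone h)) ≫ U k ≫ c'.ι.app (M k) =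
        U j ≫ c'.ι.app (M j) := by
    intro k
    induction k with
    | zero =>
      intro j h
      obtain rfl := Nat.le_zero.mp h
      simp
    | succ k ih =>
      intro j h
      rcases Nat.eq_or_lt_of_le h with rfl | h'
      · simp
      · have hjk : j ≤ k := Nat.lt_succ_iff.mp h'
        have e1 : (homOfLE (hNs.monotone h) : (N j : ℕ) ⟶ N (k + 1)) =
            homOfLE (hNs.monotone hjk) ≫ homOfLE (hNs.monotone (Nat.le_succ k)) :=
          (homOfLE_comp _ _).symm
        rw [e1, X.map_comp, Category.assoc,
          show X.map (homOfLE (hNs.monotone (Nat.le_succ k))) = U k ≫ V k from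
            (hUV k _).symm]
        simp only [Category.assoc]
        rw [show V k ≫ U (k + 1) ≫ c'.ι.app (M (k + 1)) = c'.ι.app (M k) from ?_]
        · exact ih j hjk
        · rw [← Category.assoc, hVU k (hMs.monotone (Nat.le_succ k)),
            c'.w (homOfLE (hMs.monotone (Nat.le_succ k)))]
  -- compatibility of the V's with the chain, at the level of c
  have lemB : ∀ (k j : ℕ) (h : j ≤ k),
      Y.map (homOfLE (hMs.monotone h)) ≫ V k ≫ c.ι.app (N (k + 1)) =
        V j ≫ c.ι.app (N (j + 1)) := by
    intro k
    induction k with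
    | zero =>
      intro j h
      obtain rfl := Nat.le_zero.mp h
      simp
    | succ k ih =>
      intro j h
      rcases Nat.eq_or_lt_of_le h with rfl | h'
      · simp
      · have hjk : j ≤ k := Nat.lt_succ_iff.mp h'
        have e1 : (homOfLE (hMs.monotone h) : (M j : ℕ) ⟶ M (k + 1)) =
            homOfLE (hMs.monotone hjk) ≫ homOfLE (hMs.monotone (Nat.le_succ k)) :=
          (homOfLE_comp _ _).symm
        rw [e1, Y.map_comp, Category.assoc,
          show Y.map (homOfLE (hMs.monotone (Nat.le_succ k))) = V k ≫ U (k + 1) from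
            (hVU k _).symm]
        simp only [Category.assoc]
        rw [show U (k + 1) ≫ V (k + 1) ≫ c.ι.app (N (k + 2)) = c.ι.app (N (k + 1)) from ?_]
        · exact ih j hjk
        · rw [← Category.assoc, hUV (k + 1) (hNs.monotone (Nat.le_succ (k + 1))),
            c.w (homOfLE (hNs.monotone (Nat.le_succ (k + 1))))]
  -- the two cocones
  have legFw : ∀ (j k : ℕ) (h : j ≤ k),
      X.map (homOfLE h) ≫ X.map (homOfLE hNs.le_apply) ≫ U k ≫ c'.ι.app (M k) =
        X.map (homOfLE hNs.le_apply) ≫ U j ≫ c'.ι.app (M j) := by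
    intro j k h
    rw [← Category.assoc, ← X.map_comp, homOfLE_comp,
      show (homOfLE (h.trans hNs.le_apply) : (j : ℕ) ⟶ N k) =
        homOfLE ((hNs.le_apply : j ≤ N j).trans (hNs.monotone h)) from rfl,
      ← homOfLE_comp (hNs.le_apply : j ≤ N j) (hNs.monotone h), X.map_comp, Category.assoc, lemA k j h]
  have legGw : ∀ (j k : ℕ) (h : j ≤ k),
      Y.map (homOfLE h) ≫ Y.map (homOfLE hMs.le_apply) ≫ V k ≫ c.ι.app (N (k + 1)) =
        Y.map (homOfLE hMs.le_apply) ≫ V j ≫ c.ι.app (N (j + 1)) := by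
    intro j k h
    rw [← Category.assoc, ← Y.map_comp, homOfLE_comp,
      show (homOfLE (h.trans hMs.le_apply) : (j : ℕ) ⟶ M k) =
        homOfLE ((hMs.le_apply : j ≤ M j).trans (hMs.monotone h)) from rfl,
      ← homOfLE_comp (hMs.le_apply : j ≤ M j) (hMs.monotone h), Y.map_comp, Category.assoc, lemB k j h]
  let coc1 : Cocone X :=
    { pt := c'.pt
      ι :=
        { app := fun k => X.map (homOfLE hNs.le_apply) ≫ U k ≫ c'.ι.app (M k)
          naturality := by
            intro j k f
            have hf : f = homOfLE (leOfHom f) := rfl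
            simp only [Functor.const_obj_obj, Functor.const_obj_map, Category.comp_id]
            rw [hf]
            exact legFw j k (leOfHom f) } }
  let coc2 : Cocone Y :=
    { pt := c.pt
      ι :=
        { app := fun k => Y.map (homOfLE hMs.le_apply) ≫ V k ≫ c.ι.app (N (k + 1))
          naturality := by
            intro j k f
            have hf : f = homOfLE (leOfHom f) := rfl
            simp only [Functor.const_obj_obj, Functor.const_obj_map, Category.comp_id]
            rw [hf]
            exact legGw j k (leOfHom f) } }
  -- the comparison maps
  refine ⟨⟨hc.desc coc1, hc'.desc coc2, ?_, ?_⟩⟩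
  · apply hc.hom_ext
    intro k
    rw [← Category.assoc, hc.fac coc1 k]
    show (X.map (homOfLE hNs.le_apply) ≫ U k ≫ c'.ι.app (M k)) ≫ hc'.desc coc2 =
      c.ι.app k ≫ 𝟙 c.pt
    simp only [Category.assoc]
    rw [hc'.fac coc2 (M k)]
    show X.map (homOfLE hNs.le_apply) ≫ U k ≫
        Y.map (homOfLE hMs.le_apply) ≫ V (M k) ≫ c.ι.app (N (M k + 1)) =
      c.ι.app k ≫ 𝟙 c.pt
    have hkM : k ≤ M k := hMs.le_apply
    rw [show (homOfLE (hMs.le_apply : M k ≤ M (M k)) : (M k : ℕ) ⟶ M (M k)) =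
        homOfLE (hMs.monotone hkM) from rfl, lemB (M k) k hkM,
      show U k ≫ V k ≫ c.ι.app (N (k + 1)) =
          X.map (homOfLE (hNs.monotone (Nat.le_succ k))) ≫ c.ι.app (N (k + 1)) from by
        rw [← Category.assoc, hUV k (hNs.monotone (Nat.le_succ k))],
      ← Category.assoc, ← X.map_comp, homOfLE_comp, c.w]
    simp
  · apply hc'.hom_ext
    intro k
    rw [← Category.assoc, hc'.fac coc2 k]
    show (Y.map (homOfLE hMs.le_apply) ≫ V k ≫ c.ι.app (N (k + 1))) ≫ hc.desc coc1 =
      c'.ι.app k ≫ 𝟙 c'.pt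
    simp only [Category.assoc]
    rw [hc.fac coc1 (N (k + 1))]
    show Y.map (homOfLE hMs.le_apply) ≫ V k ≫
        X.map (homOfLE hNs.le_apply) ≫ U (N (k + 1)) ≫ c'.ι.app (M (N (k + 1))) =
      c'.ι.app k ≫ 𝟙 c'.pt
    have hkN : k + 1 ≤ N (k + 1) := hNs.le_apply
    rw [show (homOfLE (hNs.le_apply : N (k + 1) ≤ N (N (k + 1))) :
        (N (k + 1) : ℕ) ⟶ N (N (k + 1))) = homOfLE (hNs.monotone hkN) from rfl,
      lemA (N (k + 1)) (k + 1) hkN,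
      show V k ≫ U (k + 1) ≫ c'.ι.app (M (k + 1)) =
          Y.map (homOfLE (hMs.monotone (Nat.le_succ k))) ≫ c'.ι.app (M (k + 1)) from by
        rw [← Category.assoc, hVU k (hMs.monotone (Nat.le_succ k))],
      ← Category.assoc, ← Y.map_comp, homOfLE_comp, c'.w]
    simp
end

section
/- Let Ω be a universal homogeneous countable ind-object of a category C in which every morphism is a monomorphism. Then every countable ind-object of C embeds into Ω. -/
open CategoryTheory Limits

/-- Every countable ind-object (colimit of a countable chain in `P`) embeds into
a universal homogeneous countable ind-object `Ω`, in a category all of whose morphisms are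
monomorphisms. -/
theorem stmt7 {D : Type*} [Category D] (P : D → Prop)
    (hmono : ∀ ⦃A B : D⦄ (f : A ⟶ B), Mono f)
    (X : ℕ ⥤ D) (hX : ∀ n, P (X.obj n))
    (c : Cocone X) (hc : IsColimit c)
    (hfp : ∀ ⦃A : D⦄, P A → ∀ g : A ⟶ c.pt,
      ∃ (n : ℕ) (h : A ⟶ X.obj n), h ≫ c.ι.app n = g)
    (huniv : ∀ ⦃A : D⦄, P A → Nonempty (A ⟶ c.pt))
    (hhomog : ∀ ⦃A : D⦄, P A → ∀ (α β : A ⟶ c.pt), ∃ σ : c.pt ≅ c.pt, β = α ≫ σ.hom)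
    (Y : ℕ ⥤ D) (hY : ∀ n, P (Y.obj n))
    (c' : Cocone Y) (hc' : IsColimit c')
    (hfp' : ∀ ⦃A : D⦄, P A → ∀ g : A ⟶ c'.pt,
      ∃ (n : ℕ) (h : A ⟶ Y.obj n), h ≫ c'.ι.app n = g) :
    Nonempty (c'.pt ⟶ c.pt) := by
  choose σ hσ using hhomog
  -- Build compatible legs by recursion, correcting with homogeneity at each step.
  let f : ∀ n, Y.obj n ⟶ c.pt := fun n => Nat.rec (huniv (hY 0)).some
    (fun n fn =>
      (huniv (hY (n+1))).some ≫
        (σ (hY n) (Y.map (homOfLE (Nat.le_succ n)) ≫ (huniv (hY (n+1))).some) fn).hom) n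
  have hf : ∀ n, Y.map (homOfLE (Nat.le_succ n)) ≫ f (n + 1) = f n := by
    intro n
    show Y.map (homOfLE (Nat.le_succ n)) ≫ (_ ≫ _) = f n
    rw [← Category.assoc]
    exact (hσ _ _ _).symm
  have hstep : ∀ i j (h : i ≤ j), Y.map (homOfLE h) ≫ f j = f i := by
    intro i j h
    induction h with
    | refl =>
        have : homOfLE (le_refl i) = 𝟙 i := rfl
        rw [this, Y.map_id, Category.id_comp]
    | @step j hij ih =>
        have : homOfLE (Nat.le_succ_of_le hij) =
            homOfLE hij ≫ homOfLE (Nat.le_succ j) := rfl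
        rw [this, Y.map_comp, Category.assoc, hf, ih]
  refine ⟨hc'.desc ⟨c.pt, ⟨f, ?_⟩⟩⟩
  intro i j g
  have : g = homOfLE (leOfHom g) := rfl
  rw [this, hstep i j (leOfHom g)]
  simp
end

section
/- Let k be an algebraically closed field of characteristic 0 and let V, W be countable-dimensional quadratic spaces over k. V and W satisfy the same polynomial identities in their Gram entries (equivalently, I(V) = I(W)) if and only if they have the same rank in ℕ ∪ {∞}. -/
open Cardinal Module Matrix

universe u v

variable {k : Type u} [Field k] {V : Type v} [AddCommGroup V] [Module k V]

lemma stmt15_exists_orthonormal [IsAlgClosed k] [CharZero k]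
    (ω : V →ₗ[k] V →ₗ[k] k) (hs : ∀ x y, ω x y = ω y x) :
    ∀ n : ℕ, (n : Cardinal) ≤ Module.rank k (LinearMap.range ω) →
      ∃ e : Fin n → V, ∀ i j, ω (e i) (e j) = if i = j then 1 else 0 := by
  intro n
  induction n with
  | zero => exact fun _ => ⟨fun i => 0, fun i _ => i.elim0⟩
  | succ n ih =>
    intro hn
    obtain ⟨e, he⟩ := ih (le_trans (by exact_mod_cast Nat.cast_le.mpr (Nat.le_succ n)) hn)
    have key : ∃ x : V, (∀ i, ω (e i) x = 0) ∧ ω x x ≠ 0 := by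
      by_contra h
      push_neg at h
      have h' : ∀ x : V, (∀ i, ω (e i) x = 0) → ω x x = 0 := h
      -- every ω z lies in the span of the ω (e i)
      have hspan : LinearMap.range ω ≤ Submodule.span k (Set.range fun i => ω (e i)) := by
        rintro _ ⟨z, rfl⟩
        have perp : ∀ y : V, ∀ i, ω (e i) (y - ∑ j, ω (e j) y • e j) = 0 := by
          intro y i
          simp [map_sub, map_sum, _root_.map_smul, smul_eq_mul, he, Finset.sum_ite_eq]
        have hzero : ∀ y₁ y₂ : V, (∀ i, ω (e i) y₁ = 0) → (∀ i, ω (e i) y₂ = 0) →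
            ω y₁ y₂ = 0 := by
          intro y₁ y₂ h1 h2
          have hadd : ω (y₁ + y₂) (y₁ + y₂) = 0 :=
            h' _ (fun i => by rw [map_add]; rw [h1 i, h2 i, add_zero])
          have e1 : ω y₁ y₁ = 0 := h' _ h1
          have e2 : ω y₂ y₂ = 0 := h' _ h2
          have : (2 : k) * ω y₁ y₂ = 0 := by
            have := hadd
            simp only [map_add, LinearMap.add_apply] at this
            rw [e1, e2, hs y₂ y₁] at this
            ring_nf at this ⊢
            linear_combination this
          exact (mul_eq_zero.mp this).resolve_left two_ne_zero
        set p := z - ∑ j, ω (e j) z • e j with hp_def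
        have hp : ∀ i, ω (e i) p = 0 := perp z
        have hωp : ω p = 0 := by
          ext y
          set q := y - ∑ j, ω (e j) y • e j with hq_def
          have hq : ∀ i, ω (e i) q = 0 := perp y
          have hyq : y = q + ∑ j, ω (e j) y • e j := by rw [hq_def]; abel
          rw [LinearMap.zero_apply, hyq, map_add, map_sum]
          rw [hzero p q hp hq]
          simp only [_root_.map_smul, smul_eq_mul]
          have : ∀ j, ω p (e j) = 0 := fun j => by rw [← hs]; exact hp j
          simp [this]
        have hz : z = p + ∑ j, ω (e j) z • e j := by rw [hp_def]; abel
        rw [hz, map_add, hωp, zero_add, map_sum]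
        refine Submodule.sum_mem _ fun j _ => ?_
        rw [_root_.map_smul]
        exact Submodule.smul_mem _ _ (Submodule.subset_span ⟨j, rfl⟩)
      have hfin : Module.rank k (LinearMap.range ω) ≤ n := by
        haveI : Module.Finite k (Submodule.span k (Set.range fun i => ω (e i))) :=
          FiniteDimensional.span_of_finite k (Set.finite_range _)
        refine le_trans (Submodule.rank_mono hspan) ?_
        rw [← Module.finrank_eq_rank]
        have : finrank k (Submodule.span k (Set.range fun i => ω (e i))) ≤ n :=
          (finrank_range_le_card _).trans_eq (Fintype.card_fin n)
        exact_mod_cast this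
      have hlt : ((n : ℕ) : Cardinal) < (((n+1 : ℕ) : ℕ) : Cardinal) :=
        Nat.cast_lt.mpr (Nat.lt_succ_self n)
      exact absurd hfin (not_le.mpr (lt_of_lt_of_le hlt hn))
    obtain ⟨x, hx0, hxx⟩ := key
    obtain ⟨d, hd⟩ := IsAlgClosed.exists_pow_nat_eq (ω x x) (by norm_num : 0 < 2)
    have hd0 : d ≠ 0 := by
      intro h; rw [h] at hd; simp at hd; exact hxx hd.symm
    refine ⟨Fin.snoc e (d⁻¹ • x), fun i j => ?_⟩
    refine Fin.lastCases ?_ ?_ i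
    · refine Fin.lastCases ?_ ?_ j
      · simp only [Fin.snoc_last, _root_.map_smul, LinearMap.smul_apply, smul_eq_mul, if_pos rfl]
        rw [← hd]
        field_simp
        simp
      · intro j'
        rw [Fin.snoc_last, Fin.snoc_castSucc]
        rw [if_neg (Fin.castSucc_lt_last j').ne']
        rw [_root_.map_smul, LinearMap.smul_apply]
        rw [hs, hx0 j', smul_zero]
    · intro i'
      refine Fin.lastCases ?_ ?_ j
      · rw [Fin.snoc_last, Fin.snoc_castSucc]
        rw [if_neg (Fin.castSucc_lt_last i').ne]
        rw [_root_.map_smul, hx0 i', smul_zero]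
      · intro j'
        rw [Fin.snoc_castSucc, Fin.snoc_castSucc, he i' j']
        simp [Fin.castSucc_inj]

lemma stmt15_sym_decomp [IsAlgClosed k] [CharZero k] {n : ℕ}
    (A : Matrix (Fin n) (Fin n) k) (hA : Aᵀ = A) :
    ∃ (m : ℕ) (N : Matrix (Fin m) (Fin n) k), m ≤ A.rank ∧ A = Nᵀ * N := by
  classical
  set B : (Fin n → k) →ₗ[k] (Fin n → k) →ₗ[k] k := Matrix.toLinearMap₂' k A with hB_def
  have hBA : ∀ x y, B x y = x ⬝ᵥ A *ᵥ y := fun x y => Matrix.toLinearMap₂'_apply' A x y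
  have hBsymm : ∀ x y, B x y = B y x := by
    intro x y
    rw [hBA, hBA, ← hA, Matrix.mulVec_transpose, dotProduct_comm,
      Matrix.dotProduct_mulVec, hA]
  have hBsym' : B.IsSymm := LinearMap.isSymm_def.mpr fun x y => by simpa using hBsymm x y
  haveI : Invertible (2 : k) := invertibleOfNonzero two_ne_zero
  obtain ⟨b, hb'⟩ := LinearMap.BilinForm.exists_orthogonal_basis hBsym'
  have hb := LinearMap.isOrthoᵢ_def.mp hb'
  set d : Fin (finrank k (Fin n → k)) → k := fun i => B (b i) (b i) with hd_def
  have hsq : ∀ i, ∃ s : k, s ^ 2 = d i := fun i =>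
    IsAlgClosed.exists_pow_nat_eq (d i) (by norm_num : 0 < 2)
  choose s hsd using hsq
  have hs0 : ∀ i, d i ≠ 0 → s i ≠ 0 := by
    intro i hdi hsi
    rw [← hsd i, hsi] at hdi
    simp at hdi
  set w : Fin (finrank k (Fin n → k)) → kˣ := fun i => if h : d i = 0 then 1 else Units.mk0 (s i)⁻¹
    (inv_ne_zero (hs0 i h)) with hw_def
  set c := b.unitsSMul w with hc_def
  set ε : Fin (finrank k (Fin n → k)) → k := fun i => if d i = 0 then 0 else 1 with hε_def
  have hdd : ∀ i, B (b i) (b i) = d i := fun i => rfl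
  have hc : ∀ i j, B (c i) (c j) = if i = j then ε i else 0 := by
    intro i j
    rw [hc_def, Basis.unitsSMul_apply, Basis.unitsSMul_apply, Units.smul_def,
      Units.smul_def]
    simp only [_root_.map_smul, LinearMap.smul_apply, smul_eq_mul]
    by_cases hij : i = j
    · subst hij
      rw [if_pos rfl]
      by_cases hdi : d i = 0
      · simp [hε_def, hdd i, hdi]
      · rw [hdd i, hw_def]
        simp only [hdi, dif_neg, not_false_iff, Units.val_mk0, hε_def, if_neg hdi]
        have hsi := hs0 i hdi
        rw [← hsd i]
        field_simp
    · rw [if_neg hij, hb i j hij]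
      simp
  -- expansion of B in the c basis
  have hBc : ∀ x y, B x y = ∑ i, c.repr x i * c.repr y i * ε i := by
    intro x y
    have step2 : ∀ i, B (c i) y = c.repr y i * ε i := by
      intro i
      conv_lhs => rw [← c.sum_repr y]
      rw [map_sum, Finset.sum_eq_single i]
      · rw [_root_.map_smul, smul_eq_mul, hc, if_pos rfl]
      · intro j _ hji
        rw [_root_.map_smul, smul_eq_mul, hc, if_neg (Ne.symm hji), mul_zero]
      · intro h; exact absurd (Finset.mem_univ i) h
    have step1 : B x y = ∑ i, c.repr x i * B (c i) y := by
      conv_lhs => rw [← c.sum_repr x]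
      rw [map_sum, LinearMap.sum_apply]
      exact Finset.sum_congr rfl fun i _ => by
        rw [_root_.map_smul, LinearMap.smul_apply, smul_eq_mul]
    rw [step1]
    refine Finset.sum_congr rfl fun i _ => ?_
    rw [step2 i]
    ring
  -- the support
  set m := Fintype.card {i // d i ≠ 0} with hm_def
  set φ : {i // d i ≠ 0} ≃ Fin m := Fintype.equivFin _ with hφ_def
  -- reduction of the sum to the support
  have hsum : ∀ f : Fin (finrank k (Fin n → k)) → k, ∑ i, f i * ε i = ∑ i : Fin m, f (φ.symm i) := by
    intro f
    have h1 : ∑ i, f i * ε i = ∑ i ∈ Finset.univ.filter (fun i => d i ≠ 0), f i := by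
      rw [Finset.sum_filter]
      refine Finset.sum_congr rfl fun i _ => ?_
      by_cases hdi : d i = 0 <;> simp [hε_def, hdi]
    have h2 : ∑ i ∈ Finset.univ.filter (fun i => d i ≠ 0), f i
        = ∑ i : {i // d i ≠ 0}, f i := by
      rw [Finset.sum_subtype (p := fun i => d i ≠ 0)
        (Finset.univ.filter (fun i => d i ≠ 0)) (fun i => by simp) f]
    rw [h1, h2, ← Equiv.sum_comp φ.symm (fun i : {i // d i ≠ 0} => f i)]
  set N : Matrix (Fin m) (Fin n) k := fun i j => c.repr (Pi.single j 1) (φ.symm i) with hN_def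
  refine ⟨m, N, ?_, ?_⟩
  · -- m ≤ A.rank
    set X : Matrix (Fin n) (Fin m) k := fun j i => c (φ.symm i) j with hX_def
    have hXAX : Xᵀ * A * X = (1 : Matrix (Fin m) (Fin m) k) := by
      ext i i'
      have : (Xᵀ * A * X) i i' = B (c (φ.symm i)) (c (φ.symm i')) := by
        rw [hBA]
        simp only [Matrix.mul_apply, dotProduct, Matrix.mulVec, Matrix.transpose_apply]
        simp only [Matrix.mul_apply, dotProduct, Matrix.mulVec, Matrix.transpose_apply,
          dotProduct, hX_def, Finset.sum_mul, Finset.mul_sum]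
        rw [Finset.sum_comm]
        refine Finset.sum_congr rfl fun j _ => ?_
        refine Finset.sum_congr rfl fun l _ => ?_
        ring
      rw [this, hc]
      have hiff : ((φ.symm i : {i // d i ≠ 0}) : Fin (finrank k (Fin n → k)))
          = ((φ.symm i' : {i // d i ≠ 0}) : Fin (finrank k (Fin n → k))) ↔ i = i' := by
        rw [Subtype.coe_inj, Equiv.apply_eq_iff_eq]
      by_cases hii : i = i'
      · subst hii
        rw [if_pos rfl, Matrix.one_apply_eq]
        simp [hε_def, (φ.symm i).2]
      · rw [if_neg (fun h => hii (hiff.mp h)), Matrix.one_apply_ne hii]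
    have h1 : (1 : Matrix (Fin m) (Fin m) k).rank = m := by
      rw [Matrix.rank_one, Fintype.card_fin]
    calc m = (Xᵀ * A * X).rank := by rw [hXAX, h1]
      _ = (Xᵀ * (A * X)).rank := by rw [Matrix.mul_assoc]
      _ ≤ (A * X).rank := Matrix.rank_mul_le_right _ _
      _ ≤ A.rank := Matrix.rank_mul_le_left _ _
  · -- A = Nᵀ * N
    ext j l
    have h1 : A j l = B (Pi.single j 1) (Pi.single l 1) := by
      rw [hBA]
      simp [Matrix.mulVec_single, dotProduct_single, single_dotProduct]
    rw [Matrix.mul_apply]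
    rw [h1, hBc, hsum (fun i => c.repr (Pi.single j 1) i * c.repr (Pi.single l 1) i)]
    refine Finset.sum_congr rfl fun i _ => ?_
    rw [Matrix.transpose_apply]

lemma stmt15_gram_rank (ω : V →ₗ[k] V →ₗ[k] k) (hs : ∀ x y, ω x y = ω y x)
    {n : ℕ} (v : Fin n → V) :
    (((Matrix.of fun i j => ω (v i) (v j) : Matrix (Fin n) (Fin n) k)).rank : Cardinal)
      ≤ Module.rank k (LinearMap.range ω) := by
  classical
  let α : (V →ₗ[k] k) →ₗ[k] (Fin n → k) := LinearMap.pi (fun j => LinearMap.applyₗ (v j))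
  let γ : (Fin n → k) →ₗ[k] (V →ₗ[k] k) := Fintype.linearCombination k (fun i => ω (v i))
  haveI : FiniteDimensional k (Submodule.span k (Set.range fun i => ω (v i))) :=
    FiniteDimensional.span_of_finite k (Set.finite_range _)
  have hfac : (Matrix.of fun i j => ω (v i) (v j) : Matrix (Fin n) (Fin n) k).mulVecLin
      = α.comp γ := by
    apply LinearMap.ext; intro x
    funext j
    simp only [Matrix.mulVecLin_apply, LinearMap.comp_apply, α, γ,
      Fintype.linearCombination_apply, LinearMap.pi_apply, LinearMap.applyₗ_apply_apply,
      map_sum, LinearMap.map_smul, LinearMap.sum_apply, LinearMap.smul_apply, smul_eq_mul,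
      Matrix.mulVec, dotProduct, Matrix.of_apply]
    exact Finset.sum_congr rfl (fun i _ => by rw [hs (v j) (v i)]; ring)
  have hrange : LinearMap.range γ ≤ Submodule.span k (Set.range fun i => ω (v i)) := by
    rintro _ ⟨x, rfl⟩
    simp only [γ, Fintype.linearCombination_apply]
    exact Submodule.sum_mem _ fun i _ => Submodule.smul_mem _ _ (Submodule.subset_span ⟨i, rfl⟩)
  have h1 : (Matrix.of fun i j => ω (v i) (v j) : Matrix (Fin n) (Fin n) k).rank
      ≤ finrank k (Submodule.span k (Set.range fun i => ω (v i))) := by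
    rw [Matrix.rank, hfac]
    have hle : LinearMap.range (α.comp γ)
        ≤ (Submodule.span k (Set.range fun i => ω (v i))).map α := by
      rw [LinearMap.range_comp]
      exact Submodule.map_mono hrange
    exact (Submodule.finrank_mono hle).trans (Submodule.finrank_map_le α _)
  have h2 : ((finrank k (Submodule.span k (Set.range fun i => ω (v i)))) : Cardinal)
      = Module.rank k (Submodule.span k (Set.range fun i => ω (v i))) :=
    Module.finrank_eq_rank k _
  calc ((Matrix.of fun i j => ω (v i) (v j) : Matrix (Fin n) (Fin n) k).rank : Cardinal)
      ≤ ((finrank k (Submodule.span k (Set.range fun i => ω (v i)))) : Cardinal) :=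
        Nat.cast_le.mpr h1
    _ = Module.rank k (Submodule.span k (Set.range fun i => ω (v i))) := h2
    _ ≤ Module.rank k (LinearMap.range ω) := by
        refine Submodule.rank_mono (Submodule.span_le.mpr ?_)
        rintro _ ⟨i, rfl⟩
        exact ⟨v i, rfl⟩

lemma stmt15_realize [IsAlgClosed k] [CharZero k]
    (ω : V →ₗ[k] V →ₗ[k] k) (hs : ∀ x y, ω x y = ω y x)
    {n : ℕ} (A : Matrix (Fin n) (Fin n) k) (hA : Aᵀ = A)
    (hr : (A.rank : Cardinal) ≤ Module.rank k (LinearMap.range ω)) :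
    ∃ v : Fin n → V, ∀ i j, ω (v i) (v j) = A i j := by
  obtain ⟨m, N, hm, hNN⟩ := stmt15_sym_decomp A hA
  obtain ⟨e, he⟩ := stmt15_exists_orthonormal ω hs m (le_trans (Nat.cast_le.mpr hm) hr)
  refine ⟨fun j => ∑ i, N i j • e i, fun j l => ?_⟩
  have step2 : ∀ i, ω (e i) (∑ i', N i' l • e i') = N i l := by
    intro i
    rw [map_sum, Finset.sum_eq_single i]
    · rw [LinearMap.map_smul, smul_eq_mul, he, if_pos rfl, mul_one]
    · intro i' _ hii'
      rw [LinearMap.map_smul, smul_eq_mul, he, if_neg (Ne.symm hii'), mul_zero]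
    · intro h; exact absurd (Finset.mem_univ i) h
  have step1 : ω (∑ i, N i j • e i) (∑ i', N i' l • e i') = ∑ i, N i j * N i l := by
    rw [map_sum ω (fun i => N i j • e i) Finset.univ, LinearMap.sum_apply]
    refine Finset.sum_congr rfl fun i _ => ?_
    rw [_root_.map_smul, LinearMap.smul_apply, smul_eq_mul, step2 i]
  rw [step1, hNN, Matrix.mul_apply]
  exact Finset.sum_congr rfl fun i _ => by rw [Matrix.transpose_apply]

lemma stmt15_ident_iff [IsAlgClosed k] [CharZero k]
    (ω : V →ₗ[k] V →ₗ[k] k) (hs : ∀ x y, ω x y = ω y x)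
    {n : ℕ} (p : MvPolynomial (Fin n × Fin n) k) :
    (∀ v : Fin n → V, MvPolynomial.eval (fun ij => ω (v ij.1) (v ij.2)) p = 0) ↔
    (∀ A : Matrix (Fin n) (Fin n) k, Aᵀ = A →
      (A.rank : Cardinal) ≤ Module.rank k (LinearMap.range ω) →
      MvPolynomial.eval (fun ij => A ij.1 ij.2) p = 0) := by
  constructor
  · intro h A hA hr
    obtain ⟨v, hv⟩ := stmt15_realize ω hs A hA hr
    have hv' : (fun ij : Fin n × Fin n => A ij.1 ij.2)
        = (fun ij : Fin n × Fin n => ω (v ij.1) (v ij.2)) := by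
      funext ij
      exact (hv ij.1 ij.2).symm
    rw [hv']
    exact h v
  · intro h v
    have hsymmA : (Matrix.of fun i j => ω (v i) (v j) : Matrix (Fin n) (Fin n) k)ᵀ
        = Matrix.of fun i j => ω (v i) (v j) := by
      ext i j
      exact hs (v j) (v i)
    have := h _ hsymmA (stmt15_gram_rank ω hs v)
    simpa using this

lemma stmt15_det_eval {n : ℕ} (f : Fin n × Fin n → k) :
    MvPolynomial.eval f ((Matrix.of fun i j : Fin n =>
        (MvPolynomial.X (i, j) : MvPolynomial (Fin n × Fin n) k)).det)
      = (Matrix.of fun i j : Fin n => f (i, j)).det := by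
  rw [RingHom.map_det]
  congr 1
  ext i j
  simp

lemma stmt15_rank_det [IsAlgClosed k] [CharZero k]
    (ω : V →ₗ[k] V →ₗ[k] k) (hs : ∀ x y, ω x y = ω y x) (n : ℕ) :
    (∀ v : Fin n → V, MvPolynomial.eval (fun ij => ω (v ij.1) (v ij.2))
        ((Matrix.of fun i j : Fin n =>
          (MvPolynomial.X (i, j) : MvPolynomial (Fin n × Fin n) k)).det) = 0)
      ↔ ¬ ((n : Cardinal) ≤ Module.rank k (LinearMap.range ω)) := by
  constructor
  · intro h hn
    obtain ⟨e, he⟩ := stmt15_exists_orthonormal ω hs n hn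
    have h1 := h e
    rw [stmt15_det_eval] at h1
    have h2 : (Matrix.of fun i j : Fin n => ω (e i) (e j)) = (1 : Matrix (Fin n) (Fin n) k) := by
      ext i j
      rw [Matrix.of_apply, he, Matrix.one_apply]
    rw [h2, Matrix.det_one] at h1
    exact one_ne_zero h1
  · intro h v
    rw [stmt15_det_eval]
    by_contra hdet
    have hu : IsUnit (Matrix.of fun i j : Fin n => ω (v i) (v j) : Matrix (Fin n) (Fin n) k) :=
      (Matrix.isUnit_iff_isUnit_det _).mpr (Ne.isUnit hdet)
    have hrank := Matrix.rank_of_isUnit _ hu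
    have hgr := stmt15_gram_rank ω hs v
    rw [hrank, Fintype.card_fin] at hgr
    exact h hgr

lemma stmt15_card_eq {c d : Cardinal} (hc : c ≤ Cardinal.aleph0) (hd : d ≤ Cardinal.aleph0)
    (h : ∀ n : ℕ, (n : Cardinal) ≤ c ↔ (n : Cardinal) ≤ d) : c = d := by
  rcases lt_or_eq_of_le hc with hc' | rfl
  · obtain ⟨m, rfl⟩ := Cardinal.lt_aleph0.mp hc'
    rcases lt_or_eq_of_le hd with hd' | rfl
    · obtain ⟨m', rfl⟩ := Cardinal.lt_aleph0.mp hd'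
      exact le_antisymm ((h m).mp le_rfl) ((h m').mpr le_rfl)
    · exfalso
      have h1 : ((m + 1 : ℕ) : Cardinal) ≤ (m : Cardinal) :=
        (h (m + 1)).mpr (Cardinal.nat_lt_aleph0 (m + 1)).le
      exact absurd (Nat.cast_le.mp h1) (by omega)
  · have hall : ∀ n : ℕ, (n : Cardinal) ≤ d := fun n =>
      (h n).mp (Cardinal.nat_lt_aleph0 n).le
    exact (le_antisymm hd (Cardinal.aleph0_le.mpr hall)).symm

/-- Two countable-dimensional quadratic spaces over an algebraically closed field
of characteristic 0 satisfy the same polynomial identities in their Gram entries (`I(V) = I(W)`)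
if and only if their forms have the same rank. -/
theorem stmt15 {k : Type u} [Field k] [IsAlgClosed k] [CharZero k]
    {V W : Type v} [AddCommGroup V] [Module k V] [AddCommGroup W] [Module k W]
    (ω : V →ₗ[k] V →ₗ[k] k) (hωsymm : ∀ x y, ω x y = ω y x)
    (η : W →ₗ[k] W →ₗ[k] k) (hηsymm : ∀ x y, η x y = η y x)
    (hdimV : Module.rank k V = Cardinal.aleph0)
    (hdimW : Module.rank k W = Cardinal.aleph0) :
    (∀ (n : ℕ) (p : MvPolynomial (Fin n × Fin n) k),
      (∀ v : Fin n → V, MvPolynomial.eval (fun ij => ω (v ij.1) (v ij.2)) p = 0) ↔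
      (∀ w : Fin n → W, MvPolynomial.eval (fun ij => η (w ij.1) (w ij.2)) p = 0)) ↔
    Module.rank k (LinearMap.range ω) = Module.rank k (LinearMap.range η) := by
  have hrω : Module.rank k (LinearMap.range ω) ≤ Cardinal.aleph0 := by
    have h := lift_rank_range_le ω
    rw [hdimV] at h
    simpa using h
  have hrη : Module.rank k (LinearMap.range η) ≤ Cardinal.aleph0 := by
    have h := lift_rank_range_le η
    rw [hdimW] at h
    simpa using h
  constructor
  · intro h
    refine stmt15_card_eq hrω hrη ?_
    intro n
    have h1 := stmt15_rank_det ω hωsymm n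
    have h2 := stmt15_rank_det η hηsymm n
    have h3 := h n ((Matrix.of fun i j : Fin n =>
      (MvPolynomial.X (i, j) : MvPolynomial (Fin n × Fin n) k)).det)
    rw [h1, h2] at h3
    tauto
  · intro hre n p
    rw [stmt15_ident_iff ω hωsymm p, stmt15_ident_iff η hηsymm p, hre]
end

section
/- Let k be an algebraically closed field of characteristic 0, let r ≥ 2 be an integer, and let V be a countable-dimensional quadratic space over k of rank exactly r (with radical of any dimension). Then V is weakly homogeneous, witnessed by rank-r subspaces: if W is a finite-dimensional quadratic space of rank exactly r and α, β : W → V are isometric embeddings, then there is an automorphism σ of V with β = σ ∘ α. -/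
open Cardinal

private lemma card_aux16 {a b : Cardinal} (h : a + b = Cardinal.aleph0)
    (ha : a < Cardinal.aleph0) : b = Cardinal.aleph0 := by
  refine le_antisymm ?_ ?_
  · calc b ≤ a + b := le_add_self
    _ = _ := h
  · by_contra hb
    have hb' : b < Cardinal.aleph0 := not_le.1 hb
    have := Cardinal.add_lt_aleph0 ha hb'
    rw [h] at this
    exact lt_irrefl _ this

/-- If `α : W → V` is an isometric map and `W₀` is a complement of the radical of `W`
with the same dimension as `V ⧸ rad`, then `α(W₀)` is a complement of the radical of `V`,
and `α` maps the radical of `W` into the radical of `V`. -/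
private lemma embed_aux16 {k V W : Type*} [Field k] [AddCommGroup V] [Module k V]
    [AddCommGroup W] [Module k W] [FiniteDimensional k W]
    (ω : V →ₗ[k] V →ₗ[k] k) (hsymm : ∀ x y, ω x y = ω y x)
    (η : W →ₗ[k] W →ₗ[k] k)
    (α : W →ₗ[k] V) (hαiso : ∀ x y, ω (α x) (α y) = η x y)
    (W₀ : Submodule k W) (hcpl : IsCompl (LinearMap.ker η) W₀)
    [FiniteDimensional k (V ⧸ LinearMap.ker ω)]
    (hVW : Module.finrank k W₀ = Module.finrank k (V ⧸ LinearMap.ker ω)) :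
    IsCompl (W₀.map α) (LinearMap.ker ω) ∧
      (LinearMap.ker η).map α ≤ LinearMap.ker ω := by
  have step1 : ∀ x : W, α x ∈ LinearMap.ker ω → x ∈ LinearMap.ker η := by
    intro x hx
    rw [LinearMap.mem_ker] at hx ⊢
    ext y
    rw [← hαiso x y, hx]
    rfl
  set φ : W →ₗ[k] V ⧸ LinearMap.ker ω := (LinearMap.ker ω).mkQ.comp α with hφ
  have hφinj : Function.Injective (φ.comp W₀.subtype) := by
    rw [← LinearMap.ker_eq_bot, eq_bot_iff]
    intro x hx
    have hx' : α (x : W) ∈ LinearMap.ker ω := by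
      have h0 : φ (x : W) = 0 := hx
      have : (Submodule.Quotient.mk (α (x : W)) : V ⧸ LinearMap.ker ω) = 0 := h0
      exact (Submodule.Quotient.mk_eq_zero _).1 this
    have := Submodule.disjoint_def.mp hcpl.disjoint (x : W) (step1 _ hx') x.2
    exact Submodule.mem_bot _ |>.2 (Subtype.ext this)
  have hrange : LinearMap.range (φ.comp W₀.subtype) = ⊤ :=
    Submodule.eq_top_of_finrank_eq (by rw [LinearMap.finrank_range_of_inj hφinj, hVW])
  have hcod : Codisjoint (W₀.map α) (LinearMap.ker ω) := by
    rw [codisjoint_iff, eq_top_iff]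
    intro v _
    have hv : (Submodule.Quotient.mk v : V ⧸ LinearMap.ker ω) ∈
        LinearMap.range (φ.comp W₀.subtype) := by rw [hrange]; trivial
    obtain ⟨x, hx⟩ := hv
    have hv2 : v - α (x : W) ∈ LinearMap.ker ω := by
      have hx' : (Submodule.Quotient.mk (α (x : W)) : V ⧸ LinearMap.ker ω) =
          Submodule.Quotient.mk v := hx
      rw [← Submodule.Quotient.mk_eq_zero (LinearMap.ker ω), Submodule.Quotient.mk_sub, hx',
        sub_self]
    exact Submodule.mem_sup.2 ⟨α (x : W), Submodule.mem_map_of_mem x.2, v - α (x : W), hv2,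
      by abel⟩
  have hdis : Disjoint (W₀.map α) (LinearMap.ker ω) := by
    rw [Submodule.disjoint_def]
    intro v hv1 hv2
    obtain ⟨x, hxW, rfl⟩ := Submodule.mem_map.1 hv1
    rw [Submodule.disjoint_def.mp hcpl.disjoint x (step1 x hv2) hxW, map_zero]
  have hcompl : IsCompl (W₀.map α) (LinearMap.ker ω) := ⟨hdis, hcod⟩
  refine ⟨hcompl, ?_⟩
  rintro v ⟨w, hw, rfl⟩
  rw [LinearMap.mem_ker]
  ext u
  have hu : u ∈ W₀.map α ⊔ LinearMap.ker ω := by rw [hcompl.sup_eq_top]; trivial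
  obtain ⟨c, hc, z, hz, rfl⟩ := Submodule.mem_sup.1 hu
  obtain ⟨x, hxW, rfl⟩ := Submodule.mem_map.1 hc
  have h1 : ω (α w) (α x) = 0 := by
    rw [hαiso, LinearMap.mem_ker.1 hw]; rfl
  have h2 : ω (α w) z = 0 := by
    rw [hsymm, LinearMap.mem_ker.1 hz]; rfl
  simp [map_add, h1, h2]

set_option maxHeartbeats 1000000 in
set_option synthInstance.maxHeartbeats 400000 in
/-- A countable-dimensional quadratic space `V` of finite rank exactly `r ≥ 2`
over an algebraically closed field of characteristic 0 is weakly homogeneous, witnessed by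
rank-`r` subspaces: any two isometric embeddings of a finite-dimensional quadratic space of
rank exactly `r` into `V` differ by an automorphism of `(V, ω)`. -/
theorem stmt16 {k V : Type*} [Field k] [IsAlgClosed k] [CharZero k]
    [AddCommGroup V] [Module k V]
    (r : ℕ) (hr : 2 ≤ r)
    (ω : V →ₗ[k] V →ₗ[k] k) (hsymm : ∀ x y, ω x y = ω y x)
    (hdim : Module.rank k V = Cardinal.aleph0)
    (hrank : Module.rank k (LinearMap.range ω) = r)
    (W : Type*) [AddCommGroup W] [Module k W] [FiniteDimensional k W]
    (η : W →ₗ[k] W →ₗ[k] k) (hηsymm : ∀ x y, η x y = η y x)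
    (hηrank : Module.rank k (LinearMap.range η) = r)
    (α β : W →ₗ[k] V) (hα : Function.Injective α) (hβ : Function.Injective β)
    (hαiso : ∀ x y, ω (α x) (α y) = η x y) (hβiso : ∀ x y, ω (β x) (β y) = η x y) :
    ∃ σ : V ≃ₗ[k] V, (∀ x y, ω (σ x) (σ y) = ω x y) ∧ ∀ x, σ (α x) = β x := by
  classical
  -- rank of the quotients by the radicals
  have hVq : Module.rank k (V ⧸ LinearMap.ker ω) = r := by
    have h := (LinearMap.quotKerEquivRange ω).lift_rank_eq
    rw [hrank, Cardinal.lift_natCast] at h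
    exact Cardinal.lift_eq_nat_iff.mp h
  have hWq : Module.rank k (W ⧸ LinearMap.ker η) = r := by
    have h := (LinearMap.quotKerEquivRange η).lift_rank_eq
    rw [hηrank, Cardinal.lift_natCast] at h
    exact Cardinal.lift_eq_nat_iff.mp h
  have : FiniteDimensional k (V ⧸ LinearMap.ker ω) := Module.finite_of_rank_eq_nat hVq
  have hVqf : Module.finrank k (V ⧸ LinearMap.ker ω) = r := Module.finrank_eq_of_rank_eq hVq
  -- the radical of V has dimension ℵ₀
  have hRad : Module.rank k (LinearMap.ker ω) = Cardinal.aleph0 := by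
    have h := Submodule.rank_quotient_add_rank (LinearMap.ker ω)
    rw [hVq, hdim] at h
    exact card_aux16 h (Cardinal.nat_lt_aleph0 r)
  -- a complement of the radical in W
  obtain ⟨W₀, hW₀⟩ := Submodule.exists_isCompl (LinearMap.ker η)
  have hW₀r : Module.rank k W₀ = r := by
    rw [← (Submodule.quotientEquivOfIsCompl _ _ hW₀).rank_eq, hWq]
  have hW₀f : Module.finrank k W₀ = Module.finrank k (V ⧸ LinearMap.ker ω) := by
    rw [Module.finrank_eq_of_rank_eq hW₀r, hVqf]
  obtain ⟨hCα, hRα⟩ := embed_aux16 ω hsymm η α hαiso W₀ hW₀ hW₀f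
  obtain ⟨hCβ, hRβ⟩ := embed_aux16 ω hsymm η β hβiso W₀ hW₀ hW₀f
  -- the equivalences W₀ ≃ α(W₀), W₀ ≃ β(W₀)
  have hinjα : Function.Injective (α.comp W₀.subtype) := hα.comp (Submodule.injective_subtype W₀)
  have hinjβ : Function.Injective (β.comp W₀.subtype) := hβ.comp (Submodule.injective_subtype W₀)
  let eα : W₀ ≃ₗ[k] (W₀.map α : Submodule k V) :=
    (LinearEquiv.ofInjective _ hinjα).trans (LinearEquiv.ofEq _ _
      (by rw [LinearMap.range_comp, Submodule.range_subtype]))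
  let eβ : W₀ ≃ₗ[k] (W₀.map β : Submodule k V) :=
    (LinearEquiv.ofInjective _ hinjβ).trans (LinearEquiv.ofEq _ _
      (by rw [LinearMap.range_comp, Submodule.range_subtype]))
  have heα : ∀ x : W₀, ((eα x : V)) = α (x : W) := fun x => rfl
  have heβ : ∀ x : W₀, ((eβ x : V)) = β (x : W) := fun x => rfl
  -- the equivalences ker η ≃ α(ker η), ker η ≃ β(ker η)
  have hinjαr : Function.Injective (α.comp (LinearMap.ker η).subtype) :=
    hα.comp (Submodule.injective_subtype _)
  have hinjβr : Function.Injective (β.comp (LinearMap.ker η).subtype) :=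
    hβ.comp (Submodule.injective_subtype _)
  let eAr : (LinearMap.ker η : Submodule k W) ≃ₗ[k] ((LinearMap.ker η).map α : Submodule k V) :=
    (LinearEquiv.ofInjective _ hinjαr).trans (LinearEquiv.ofEq _ _
      (by rw [LinearMap.range_comp, Submodule.range_subtype]))
  let eBr : (LinearMap.ker η : Submodule k W) ≃ₗ[k] ((LinearMap.ker η).map β : Submodule k V) :=
    (LinearEquiv.ofInjective _ hinjβr).trans (LinearEquiv.ofEq _ _
      (by rw [LinearMap.range_comp, Submodule.range_subtype]))
  have heAr : ∀ x : (LinearMap.ker η : Submodule k W), ((eAr x : V)) = α (x : W) := fun x => rfl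
  have heBr : ∀ x : (LinearMap.ker η : Submodule k W), ((eBr x : V)) = β (x : W) := fun x => rfl
  -- work inside the radical
  set Rad := LinearMap.ker ω with hRadDef
  let Ain : Submodule k Rad := Submodule.comap Rad.subtype ((LinearMap.ker η).map α)
  let Bin : Submodule k Rad := Submodule.comap Rad.subtype ((LinearMap.ker η).map β)
  let eAin : Ain ≃ₗ[k] ((LinearMap.ker η).map α : Submodule k V) :=
    Submodule.comapSubtypeEquivOfLe hRα
  let eBin : Bin ≃ₗ[k] ((LinearMap.ker η).map β : Submodule k V) :=
    Submodule.comapSubtypeEquivOfLe hRβ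
  have finA : Module.Finite k Ain := Module.Finite.equiv (eAr.trans eAin.symm)
  have finB : Module.Finite k Bin := Module.Finite.equiv (eBr.trans eBin.symm)
  obtain ⟨A', hA'⟩ := Submodule.exists_isCompl Ain
  obtain ⟨B', hB'⟩ := Submodule.exists_isCompl Bin
  have hA'r : Module.rank k A' = Cardinal.aleph0 := by
    have h := (Submodule.prodEquivOfIsCompl _ _ hA').rank_eq
    rw [rank_prod', hRad] at h
    exact card_aux16 h (Module.rank_lt_aleph0 k Ain)
  have hB'r : Module.rank k B' = Cardinal.aleph0 := by
    have h := (Submodule.prodEquivOfIsCompl _ _ hB').rank_eq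
    rw [rank_prod', hRad] at h
    exact card_aux16 h (Module.rank_lt_aleph0 k Bin)
  haveI : Module.Free k A' := Module.Free.of_divisionRing (K := k) (V := A')
  haveI : Module.Free k B' := Module.Free.of_divisionRing (K := k) (V := B')
  let g' : A' ≃ₗ[k] B' :=
    Classical.choice (nonempty_linearEquiv_of_rank_eq (by rw [hA'r, hB'r]))
  let g : Ain ≃ₗ[k] Bin := ((eAin.trans eAr.symm).trans eBr).trans eBin.symm
  let pA := Submodule.prodEquivOfIsCompl _ _ hA'
  let pB := Submodule.prodEquivOfIsCompl _ _ hB'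
  let τ : Rad ≃ₗ[k] Rad := (pA.symm.trans (g.prodCongr g')).trans pB
  -- key property of τ
  have hτ : ∀ (w : W) (hw : w ∈ LinearMap.ker η) (hm : α w ∈ Rad),
      ((τ ⟨α w, hm⟩ : Rad) : V) = β w := by
    intro w hw hm
    have hain : (⟨α w, hm⟩ : Rad) ∈ Ain := by
      show Rad.subtype ⟨α w, hm⟩ ∈ (LinearMap.ker η).map α
      exact Submodule.mem_map_of_mem hw
    have hpA : pA.symm (⟨α w, hm⟩ : Rad) = (⟨⟨α w, hm⟩, hain⟩, 0) := by
      rw [LinearEquiv.symm_apply_eq]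
      show (⟨α w, hm⟩ : Rad) = (⟨⟨α w, hm⟩, hain⟩ : Ain) + ((0 : A') : Rad)
      simp
    have hg : g ⟨⟨α w, hm⟩, hain⟩ = eBin.symm (eBr ⟨w, hw⟩) := by
      have h1 : eAin ⟨⟨α w, hm⟩, hain⟩ = eAr ⟨w, hw⟩ := by
        apply Subtype.ext
        rw [heAr]
        exact Submodule.comapSubtypeEquivOfLe_apply_coe hRα _
      show eBin.symm (eBr (eAr.symm (eAin ⟨⟨α w, hm⟩, hain⟩))) = _
      rw [h1, eAr.symm_apply_apply]
    show ((pB ((g.prodCongr g') (pA.symm ⟨α w, hm⟩)) : Rad) : V) = β w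
    rw [hpA]
    have : (g.prodCongr g') (⟨⟨α w, hm⟩, hain⟩, 0) = (g ⟨⟨α w, hm⟩, hain⟩, 0) := by
      simp [LinearEquiv.prodCongr_apply]
    rw [this, hg]
    have hpB : (pB (eBin.symm (eBr ⟨w, hw⟩), 0) : Rad) =
        ((eBin.symm (eBr ⟨w, hw⟩) : Bin) : Rad) + ((0 : B') : Rad) :=
      Submodule.coe_prodEquivOfIsCompl' _ _ hB' _
    rw [hpB]
    have : (((eBin.symm (eBr ⟨w, hw⟩) : Bin) : Rad) : V) = β w := by
      have := Submodule.comapSubtypeEquivOfLe_apply_coe hRβ (eBin.symm (eBr ⟨w, hw⟩))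
      rw [show eBin (eBin.symm (eBr ⟨w, hw⟩)) = eBr ⟨w, hw⟩ from
        eBin.apply_symm_apply _] at this
      rw [← this, heBr]
    simp [this]
  -- assemble σ
  let pC := Submodule.prodEquivOfIsCompl _ _ hCα
  let pC' := Submodule.prodEquivOfIsCompl _ _ hCβ
  let f : (W₀.map α : Submodule k V) ≃ₗ[k] (W₀.map β : Submodule k V) := eα.symm.trans eβ
  let σ : V ≃ₗ[k] V := (pC.symm.trans (f.prodCongr τ)).trans pC'
  have hσ : ∀ (c : (W₀.map α : Submodule k V)) (z : Rad),
      σ ((c : V) + (z : V)) = ((f c : V)) + ((τ z : Rad) : V) := by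
    intro c z
    have h1 : (c : V) + (z : V) = pC (c, z) :=
      (Submodule.coe_prodEquivOfIsCompl' _ _ hCα (c, z)).symm
    have h2 : σ ((c : V) + (z : V)) = pC' ((f.prodCongr τ) (pC.symm ((c : V) + (z : V)))) := by
      simp only [σ, LinearEquiv.trans_apply]
    rw [h2, h1, LinearEquiv.symm_apply_apply]
    exact Submodule.coe_prodEquivOfIsCompl' _ _ hCβ _
  have hdecomp : ∀ v : V, ∃ (c : (W₀.map α : Submodule k V)) (z : Rad),
      v = (c : V) + (z : V) := by
    intro v
    refine ⟨(pC.symm v).1, (pC.symm v).2, ?_⟩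
    conv_lhs => rw [← pC.apply_symm_apply v]
    exact Submodule.coe_prodEquivOfIsCompl' _ _ hCα _
  -- coercion facts
  have hfcoe : ∀ c : (W₀.map α : Submodule k V), ((f c : V)) = β ((eα.symm c : W₀) : W) :=
    fun c => heβ _
  have hccoe : ∀ c : (W₀.map α : Submodule k V), (c : V) = α ((eα.symm c : W₀) : W) := by
    intro c
    conv_lhs => rw [← eα.apply_symm_apply c]
    exact heα _
  have hradz : ∀ (z : Rad) (u : V), ω (z : V) u = 0 := by
    intro z u
    rw [LinearMap.mem_ker.1 z.2]
    rfl
  have hradz2 : ∀ (z : Rad) (u : V), ω u (z : V) = 0 := fun z u => by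
    rw [hsymm]; exact hradz z u
  refine ⟨σ, ?_, ?_⟩
  · intro v v'
    obtain ⟨c, z, rfl⟩ := hdecomp v
    obtain ⟨c', z', rfl⟩ := hdecomp v'
    rw [hσ, hσ]
    have e1 : ∀ (a b : V) (z z' : Rad), ω (a + (z : V)) (b + (z' : V)) = ω a b := by
      intro a b z z'
      simp [map_add, hradz, hradz2]
    rw [e1, e1, hfcoe, hfcoe, hβiso, hccoe c, hccoe c', hαiso]
  · intro x
    have hx : x ∈ LinearMap.ker η ⊔ W₀ := by rw [hW₀.sup_eq_top]; trivial
    obtain ⟨w, hw, x₀, hx₀, rfl⟩ := Submodule.mem_sup.1 hx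
    have hm : α w ∈ Rad := hRα (Submodule.mem_map_of_mem hw)
    have hax : α (w + x₀) = ((eα ⟨x₀, hx₀⟩ : V)) + ((⟨α w, hm⟩ : Rad) : V) := by
      rw [heα, map_add]
      exact add_comm _ _
    rw [hax, hσ, hτ w hw hm, hfcoe, eα.symm_apply_apply, map_add]
    exact add_comm _ _
end

section
/- Let k be an algebraically closed field of characteristic 0 and let V be a countable-dimensional quadratic space of infinite rank with nonzero radical. Then for every s ≥ 0 there exist a finite-dimensional quadratic space W of rank ≥ s and isometric embeddings α, β : W → V such that no automorphism σ of V satisfies β = σ ∘ α. (Consequently V is not weakly homogeneous.) -/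
section Aux
variable {k V : Type*} [Field k] [IsAlgClosed k] [CharZero k]
    [AddCommGroup V] [Module k V]

lemma stmt17_exists_good (ω : V →ₗ[k] V →ₗ[k] k) (hsymm : ∀ x y, ω x y = ω y x)
    (hrank : Cardinal.aleph0 ≤ Module.rank k (LinearMap.range ω))
    {n : ℕ} (v : Fin n → V) (hv : ∀ i j, ω (v i) (v j) = if i = j then 1 else 0) :
    ∃ u, (∀ i, ω (v i) u = 0) ∧ ω u u ≠ 0 := by
  by_contra h
  push_neg at h
  have hpol : ∀ u u', (∀ i, ω (v i) u = 0) → (∀ i, ω (v i) u' = 0) → ω u u' = 0 := by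
    intro u u' hu hu'
    have h1 : ω (u + u') (u + u') = 0 := h _ (fun i => by simp [hu i, hu' i])
    have h2 : ω u u = 0 := h _ hu
    have h3 : ω u' u' = 0 := h _ hu'
    have h4 := hsymm u u'
    simp [map_add, LinearMap.add_apply, h2, h3] at h1
    have : (2 : k) * ω u u' = 0 := by rw [two_mul]; linear_combination h1 + h4
    simpa [two_ne_zero] using mul_eq_zero.mp this
  set P : V → V := fun y => ∑ i, ω (v i) y • v i with hP
  have hPmem : ∀ y, P y ∈ Submodule.span k (Set.range v) := fun y =>
    Submodule.sum_mem _ (fun i _ => Submodule.smul_mem _ _ (Submodule.subset_span ⟨i, rfl⟩))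
  have hUy : ∀ y (i : Fin n), ω (v i) (y - P y) = 0 := by
    intro y i
    simp [hP, map_sub, map_sum, map_smul, hv, smul_eq_mul, Finset.mul_sum,
      Finset.sum_ite_eq']
  have key : ∀ y, ω y = ω (P y) := by
    intro y
    ext z
    have h1 : ω (y - P y) (z - P z) = 0 := hpol _ _ (hUy y) (hUy z)
    have h2 : ω (y - P y) (P z) = 0 := by
      rw [show P z = ∑ i, ω (v i) z • v i from rfl, map_sum]
      simp only [map_smul, smul_eq_mul]
      exact Finset.sum_eq_zero fun i _ => by
        rw [hsymm (y - P y) (v i), hUy y i, mul_zero]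
    have h3 : ω (y - P y) z = 0 := by
      have := h1
      rw [map_sub, h2] at this
      simpa using this
    have := h3
    rw [map_sub, LinearMap.sub_apply, sub_eq_zero] at this
    exact this
  have hle : LinearMap.range ω ≤ Submodule.map ω (Submodule.span k (Set.range v)) := by
    rintro f ⟨y, rfl⟩
    exact ⟨P y, hPmem y, (key y).symm⟩
  have hfin : Module.rank k (LinearMap.range ω) < Cardinal.aleph0 := by
    calc Module.rank k (LinearMap.range ω)
        ≤ Module.rank k (Submodule.map ω (Submodule.span k (Set.range v))) :=
          Submodule.rank_mono hle
      _ = Module.rank k (Submodule.span k (ω '' Set.range v)) := by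
          rw [Submodule.map_span]
      _ ≤ Cardinal.mk (ω '' Set.range v) := rank_span_le _
      _ < Cardinal.aleph0 := ((Set.finite_range v).image _).lt_aleph0
  exact absurd hrank hfin.not_ge

lemma stmt17_orthonormal (ω : V →ₗ[k] V →ₗ[k] k) (hsymm : ∀ x y, ω x y = ω y x)
    (hrank : Cardinal.aleph0 ≤ Module.rank k (LinearMap.range ω)) :
    ∀ n, ∃ v : Fin n → V, ∀ i j, ω (v i) (v j) = if i = j then 1 else 0 := by
  intro n
  induction n with
  | zero => exact ⟨finZeroElim, fun i => i.elim0⟩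
  | succ n ih =>
    obtain ⟨v, hv⟩ := ih
    obtain ⟨u, hu, hu0⟩ := stmt17_exists_good ω hsymm hrank v hv
    obtain ⟨c, hc⟩ := IsAlgClosed.exists_pow_nat_eq (ω u u) (n := 2) (by norm_num)
    have hc0 : c ≠ 0 := by
      intro h; rw [h] at hc; simp at hc; exact hu0 hc.symm
    refine ⟨Fin.snoc v (c⁻¹ • u), fun i j => ?_⟩
    have huv : ∀ i, ω u (v i) = 0 := fun i => (hsymm _ _).symm ▸ hu i
    refine Fin.lastCases ?_ (fun i => ?_) i <;> [skip; skip] <;>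
      refine Fin.lastCases ?_ (fun j => ?_) j
    · simp [Fin.snoc_last, map_smul, smul_eq_mul, ← hc]
      field_simp
    · simp [Fin.snoc_last, Fin.snoc_castSucc, map_smul, smul_eq_mul, huv j,
        (Fin.castSucc_lt_last j).ne']
    · simp [Fin.snoc_last, Fin.snoc_castSucc, map_smul, smul_eq_mul, hu i,
        (Fin.castSucc_lt_last i).ne]
    · simp [Fin.snoc_castSucc, hv i j, Fin.castSucc_inj]
end Aux



/-- A countable-dimensional quadratic space of infinite rank with nonzero radical
is not weakly homogeneous: for every `s` there are a finite-dimensional quadratic space of rank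
`≥ s` and two isometric embeddings into `V` not differing by an automorphism of `(V, ω)`. -/
theorem stmt17 {k V : Type*} [Field k] [IsAlgClosed k] [CharZero k]
    [AddCommGroup V] [Module k V]
    (ω : V →ₗ[k] V →ₗ[k] k) (hsymm : ∀ x y, ω x y = ω y x)
    (hdim : Module.rank k V = Cardinal.aleph0)
    (hrank : Cardinal.aleph0 ≤ Module.rank k (LinearMap.range ω))
    (hrad : LinearMap.ker ω ≠ ⊥) :
    ∀ s : ℕ, ∃ (m : ℕ) (η : (Fin m → k) →ₗ[k] (Fin m → k) →ₗ[k] k),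
      (∀ x y, η x y = η y x) ∧
      (s : Cardinal) ≤ Module.rank k (LinearMap.range η) ∧
      ∃ (α β : (Fin m → k) →ₗ[k] V),
        Function.Injective α ∧ Function.Injective β ∧
        (∀ x y, ω (α x) (α y) = η x y) ∧ (∀ x y, ω (β x) (β y) = η x y) ∧
        ¬ ∃ σ : V ≃ₗ[k] V, (∀ x y, ω (σ x) (σ y) = ω x y) ∧ ∀ x, σ (α x) = β x := by
  intro s
  classical
  obtain ⟨v, hv⟩ := stmt17_orthonormal ω hsymm hrank (s + 2)
  obtain ⟨r, hrker, hr0⟩ := Submodule.exists_mem_ne_zero_of_ne_bot hrad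
  have hωr : ω r = 0 := LinearMap.mem_ker.mp hrker
  have hrx : ∀ x, ω r x = 0 := fun x => by rw [hωr]; rfl
  have hxr : ∀ x : V, ω x r = 0 := fun x => by rw [hsymm, hrx]
  obtain ⟨i₀, hi₀⟩ := IsAlgClosed.exists_pow_nat_eq (-1 : k) (n := 2) (by norm_num)
  set p : Fin (s + 2) := ⟨s, by omega⟩ with hp
  set q : Fin (s + 2) := ⟨s + 1, by omega⟩ with hq
  have hpq : p ≠ q := by simp [hp, hq, Fin.ext_iff]
  set w : V := v p + i₀ • v q with hw
  set e : Fin s → Fin (s + 2) := fun j => ⟨j, by omega⟩ with he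
  have hep : ∀ j, e j ≠ p := fun j => by simp [he, hp, Fin.ext_iff]; omega
  have heq : ∀ j, e j ≠ q := fun j => by simp [he, hq, Fin.ext_iff]; omega
  have hee : ∀ j j', (e j = e j') ↔ j = j' := fun j j' => by
    simp [he, Fin.ext_iff]
  -- key values of ω involving w
  have hvw : ∀ j, ω (v (e j)) w = 0 := by
    intro j
    simp [hw, map_add, map_smul, smul_eq_mul, hv, hep j, heq j]
  have hww : ω w w = 0 := by
    simp [hw, map_add, LinearMap.add_apply, map_smul, LinearMap.smul_apply,
      smul_eq_mul, hv, hpq, hpq.symm]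
    linear_combination hi₀
  have hpw : ω (v p) w = 1 := by
    simp [hw, map_add, map_smul, smul_eq_mul, hv, hpq]
  have hwx : ∀ x, ω w (v x) = ω (v x) w := fun x => hsymm _ _
  -- the two families
  set a : Fin (s + 1) → V := Fin.snoc (fun j : Fin s => v (e j)) r with ha
  set b : Fin (s + 1) → V := Fin.snoc (fun j : Fin s => v (e j)) w with hb
  -- common Gram matrix
  set G : Fin (s + 1) → Fin (s + 1) → k :=
    fun i j => if i = j then (if (i : ℕ) < s then 1 else 0) else 0 with hG
  have hGa : ∀ i j, ω (a i) (a j) = G i j := by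
    intro i j
    refine Fin.lastCases ?_ (fun i' => ?_) i <;> refine Fin.lastCases ?_ (fun j' => ?_) j
    · simp [ha, hG, Fin.snoc_last, hrx]
    · simp [ha, hG, Fin.snoc_last, Fin.snoc_castSucc, hrx,
        (Fin.castSucc_lt_last j').ne']
    · simp [ha, hG, Fin.snoc_last, Fin.snoc_castSucc, hxr,
        (Fin.castSucc_lt_last i').ne]
    · simp [ha, hG, Fin.snoc_castSucc, hv, hee, Fin.castSucc_inj, i'.isLt]
  have hGb : ∀ i j, ω (b i) (b j) = G i j := by
    intro i j
    refine Fin.lastCases ?_ (fun i' => ?_) i <;> refine Fin.lastCases ?_ (fun j' => ?_) j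
    · simp [hb, hG, Fin.snoc_last, hww]
    · simp [hb, hG, Fin.snoc_last, Fin.snoc_castSucc, hwx, hvw,
        (Fin.castSucc_lt_last j').ne']
    · simp [hb, hG, Fin.snoc_last, Fin.snoc_castSucc, hvw,
        (Fin.castSucc_lt_last i').ne]
    · simp [hb, hG, Fin.snoc_castSucc, hv, hee, Fin.castSucc_inj, i'.isLt]
  -- the quadratic space W = k^(s+1) with diagonal form
  set η : (Fin (s + 1) → k) →ₗ[k] (Fin (s + 1) → k) →ₗ[k] k :=
    ∑ j : Fin s, (LinearMap.proj (R := k) (φ := fun _ : Fin (s+1) => k)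
        j.castSucc).smulRight (LinearMap.proj j.castSucc) with hη
  have hηval : ∀ x y, η x y = ∑ j : Fin s, x j.castSucc * y j.castSucc := by
    intro x y
    simp [hη, LinearMap.sum_apply, LinearMap.smulRight_apply, smul_eq_mul, mul_comm]
  have hηval' : ∀ x y : Fin (s+1) → k,
      η x y = ∑ i : Fin (s + 1), (if (i : ℕ) < s then x i * y i else 0) := by
    intro x y
    rw [hηval, Fin.sum_univ_castSucc]
    simp
  -- embeddings
  set α : (Fin (s + 1) → k) →ₗ[k] V :=
    ∑ i : Fin (s + 1), (LinearMap.proj (R := k) (φ := fun _ : Fin (s+1) => k)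
        i).smulRight (a i) with hα
  set β : (Fin (s + 1) → k) →ₗ[k] V :=
    ∑ i : Fin (s + 1), (LinearMap.proj (R := k) (φ := fun _ : Fin (s+1) => k)
        i).smulRight (b i) with hβ
  have hαval : ∀ x, α x = ∑ i, x i • a i := by
    intro x; simp [hα, LinearMap.sum_apply, LinearMap.smulRight_apply]
  have hβval : ∀ x, β x = ∑ i, x i • b i := by
    intro x; simp [hβ, LinearMap.sum_apply, LinearMap.smulRight_apply]
  -- products
  have hprod : ∀ (c : Fin (s+1) → V), (∀ i j, ω (c i) (c j) = G i j) →
      ∀ x y : Fin (s+1) → k,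
        ω (∑ i, x i • c i) (∑ i, y i • c i) = η x y := by
    intro c hc x y
    rw [hηval']
    have expand : ω (∑ i, x i • c i) (∑ i, y i • c i) = ∑ i, ∑ j, x j * (y i * G j i) := by
      rw [map_sum]
      refine Finset.sum_congr rfl fun i _ => ?_
      rw [map_smul, smul_eq_mul, map_sum ω, LinearMap.sum_apply, Finset.mul_sum]
      refine Finset.sum_congr rfl fun j _ => ?_
      rw [map_smul ω, LinearMap.smul_apply, smul_eq_mul, hc]
      ring
    rw [expand]
    refine Finset.sum_congr rfl fun i _ => ?_
    have hterm : ∀ j, x j * (y i * G j i) =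
        if j = i then (if (i:ℕ) < s then x i * y i else 0) else 0 := by
      intro j
      rw [hG]
      rcases eq_or_ne j i with h | h
      · subst h
        by_cases hs : (j : ℕ) < s <;> simp [hs] <;> ring
      · simp [h]
    rw [Finset.sum_congr rfl fun j _ => hterm j, Finset.sum_ite_eq']
    simp
  -- linear independence / injectivity
  have hLI : ∀ (c : Fin (s+1) → V), (∀ i j, ω (c i) (c j) = G i j) → c (Fin.last s) ≠ 0 →
      Function.Injective (fun x : Fin (s+1) → k => ∑ i, x i • c i) := by
    intro c hc hclast
    have hli : ∀ g : Fin (s+1) → k, ∑ i, g i • c i = 0 → ∀ i, g i = 0 := by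
      intro g hg
      have hcast : ∀ j : Fin s, g j.castSucc = 0 := by
        intro j
        have h1 : ω (c j.castSucc) (∑ i, g i • c i) = 0 := by rw [hg]; simp
        rw [map_sum] at h1
        simp only [map_smul, smul_eq_mul] at h1
        have h2 : ∀ i, g i * ω (c j.castSucc) (c i) =
            if j.castSucc = i then g j.castSucc else 0 := by
          intro i
          rw [hc, hG]
          by_cases hij : j.castSucc = i
          · subst hij; simp [j.isLt]
          · simp [hij]
        rw [Finset.sum_congr rfl (fun i _ => h2 i), Finset.sum_ite_eq] at h1
        simpa using h1
      have hlast : g (Fin.last s) = 0 := by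
        have : ∑ i, g i • c i = g (Fin.last s) • c (Fin.last s) := by
          rw [Fin.sum_univ_castSucc]
          simp [hcast]
        rw [this] at hg
        rcases smul_eq_zero.mp hg with h | h
        · exact h
        · exact absurd h hclast
      intro i
      refine Fin.lastCases ?_ (fun i' => ?_) i
      · exact hlast
      · exact hcast i'
    intro x₁ x₂ hx
    have hx' : ∑ i, x₁ i • c i = ∑ i, x₂ i • c i := hx
    have h0 : ∑ i, (x₁ - x₂) i • c i = 0 := by
      simp only [Pi.sub_apply, sub_smul, Finset.sum_sub_distrib]
      rw [hx', sub_self]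
    funext i
    have := hli _ h0 i
    simpa [sub_eq_zero] using this
  have hrne : r ≠ 0 := hr0
  have hwne : w ≠ 0 := by
    intro h
    rw [h] at hpw
    simp at hpw
  have halast : a (Fin.last s) = r := by simp [ha]
  have hblast : b (Fin.last s) = w := by simp [hb]
  -- rank of η
  have hrankη : (s : Cardinal) ≤ Module.rank k (LinearMap.range η) := by
    have hf : ∀ (j : Fin s) (y : Fin (s+1) → k),
        η (Pi.single (j.castSucc) 1) y = y j.castSucc := by
      intro j y
      rw [hηval]
      have : ∀ t : Fin s, Pi.single (M := fun _ : Fin (s+1) => k) j.castSucc 1 t.castSucc * y t.castSucc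
          = if t = j then y j.castSucc else 0 := by
        intro t
        rcases eq_or_ne t j with h | h
        · subst h; simp [Pi.single_apply]
        · simp [Pi.single_apply, h, Fin.castSucc_inj.not.mpr h]
      rw [Finset.sum_congr rfl fun t _ => this t, Finset.sum_ite_eq']
      simp
    set F : Fin s → LinearMap.range η :=
      fun j => ⟨η (Pi.single j.castSucc 1), LinearMap.mem_range_self _ _⟩ with hF
    have hFli : LinearIndependent k F := by
      apply LinearIndependent.of_comp (LinearMap.range η).subtype
      rw [Fintype.linearIndependent_iff]
      intro g hg j
      have := congrArg (fun φ => φ (Pi.single (M := fun _ : Fin (s+1) => k) j.castSucc 1)) hg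
      simp only [LinearMap.sum_apply, LinearMap.smul_apply, Function.comp,
        Submodule.coe_subtype, hF, smul_eq_mul, LinearMap.zero_apply] at this
      have h2 : ∀ t : Fin s, g t * η (Pi.single t.castSucc 1) (Pi.single (M := fun _ : Fin (s+1) => k) j.castSucc 1)
          = if t = j then g j else 0 := by
        intro t
        rw [hf]
        rcases eq_or_ne t j with h | h
        · subst h; simp [Pi.single_apply]
        · simp [Pi.single_apply, h, Fin.castSucc_inj.not.mpr h]
      rw [Finset.sum_congr rfl fun t _ => h2 t, Finset.sum_ite_eq'] at this
      simpa using this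
    have := hFli.cardinal_lift_le_rank
    simpa using this
  refine ⟨s + 1, η, ?_, hrankη, α, β, ?_, ?_, ?_, ?_, ?_⟩
  · intro x y
    rw [hηval, hηval]
    exact Finset.sum_congr rfl fun j _ => mul_comm _ _
  · have := hLI a hGa (by rw [halast]; exact hrne)
    intro x₁ x₂ hx
    refine this ?_
    show (∑ i, x₁ i • a i) = ∑ i, x₂ i • a i
    rw [← hαval, ← hαval, hx]
  · have := hLI b hGb (by rw [hblast]; exact hwne)
    intro x₁ x₂ hx
    refine this ?_
    show (∑ i, x₁ i • b i) = ∑ i, x₂ i • b i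
    rw [← hβval, ← hβval, hx]
  · intro x y; rw [hαval, hαval]; exact hprod a hGa x y
  · intro x y; rw [hβval, hβval]; exact hprod b hGb x y
  · rintro ⟨σ, hσω, hσc⟩
    have hαr : α (Pi.single (Fin.last s) 1) = r := by
      rw [hαval]
      have : ∀ i : Fin (s+1), Pi.single (M := fun _ : Fin (s+1) => k) (Fin.last s) 1 i • a i
          = if i = Fin.last s then a (Fin.last s) else 0 := by
        intro i
        rcases eq_or_ne i (Fin.last s) with h | h
        · subst h; simp
        · simp [Pi.single_apply, h]
      rw [Finset.sum_congr rfl fun i _ => this i, Finset.sum_ite_eq']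
      simp [halast]
    have hβw : β (Pi.single (Fin.last s) 1) = w := by
      rw [hβval]
      have : ∀ i : Fin (s+1), Pi.single (M := fun _ : Fin (s+1) => k) (Fin.last s) 1 i • b i
          = if i = Fin.last s then b (Fin.last s) else 0 := by
        intro i
        rcases eq_or_ne i (Fin.last s) with h | h
        · subst h; simp
        · simp [Pi.single_apply, h]
      rw [Finset.sum_congr rfl fun i _ => this i, Finset.sum_ite_eq']
      simp [hblast]
    have hσr : σ r = w := by rw [← hαr, hσc, hβw]
    have h1 : ω w (v p) = 0 := by
      have := hσω r (σ.symm (v p))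
      rw [hσr, σ.apply_symm_apply, hrx] at this
      exact this
    rw [hsymm, hpw] at h1
    exact one_ne_zero h1
end
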